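/- arXiv:1504.00565 — 4 statements merged into one kernel-verified Lean document; each statement's English description precedes it below -/
import Mathlib

section
/- Let m ≥ 1 and N ≥ 3 be integers, R ∈ (0,∞], and let w ∈ C^{2m}([0,R)) satisfy Δ_N^m w ≤ 0 on (0,R) together with (Δ_N^i w)(0) = 0 and (Δ_N^i w)'(0) = 0 for every 0 ≤ i ≤ m−1. Then Δ_N^i w ≤ 0 on [0,R) for every 0 ≤ i ≤ m−1; in particular w ≤ 0 on [0,R). -/
open MeasureTheory Filter Set
open scoped ENNReal

/-- The radial Laplacian in dimension `N`: `(Δ_N u)(r) = u''(r) + ((N-1)/r) u'(r)` for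
`r ≠ 0`, extended by continuity (right-limit) at `r = 0`. -/
noncomputable def rlap (N : ℕ) (u : ℝ → ℝ) : ℝ → ℝ := fun r =>
  if r = 0 then
    limUnder (nhdsWithin 0 (Set.Ioi 0))
      (fun s => deriv (deriv u) s + ((N : ℝ) - 1) / s * deriv u s)
  else deriv (deriv u) r + ((N : ℝ) - 1) / r * deriv u r

/-- `ω_{N-1}`, the surface measure of the unit sphere `S^{N-1} ⊂ ℝ^N`, expressed as
`N` times the volume of the unit ball. -/
noncomputable def sphereVol (N : ℕ) : ℝ :=
  (N : ℝ) * (volume (Metric.ball (0 : EuclideanSpace ℝ (Fin N)) 1)).toReal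

noncomputable def Bint (j : ℕ) (H : ℝ → ℝ) : ℝ → ℝ :=
  fun x => ∫ t in (0:ℝ)..1, t ^ j * H (x * t)

namespace RadAux

lemma mul_mem_Icc {b x t : ℝ} (hx : x ∈ Icc 0 b) (ht : t ∈ Icc (0:ℝ) 1) :
    x * t ∈ Icc 0 b := by
  constructor
  · exact mul_nonneg hx.1 ht.1
  · calc x * t ≤ x * 1 := by nlinarith [hx.1, ht.2]
    _ = x := mul_one x
    _ ≤ b := hx.2

lemma hasDerivAt_interior {b : ℝ} {H : ℝ → ℝ} (hH : DifferentiableOn ℝ H (Icc 0 b))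
    {y : ℝ} (hy : y ∈ Ioo 0 b) : HasDerivAt H (derivWithin H (Icc 0 b) y) y := by
  have hmem : Icc 0 b ∈ nhds y := Icc_mem_nhds hy.1 hy.2
  have h1 := (hH y (Ioo_subset_Icc_self hy)).differentiableAt hmem
  rw [derivWithin_of_mem_nhds hmem]
  exact h1.hasDerivAt

lemma contOn_comp {b : ℝ} {H : ℝ → ℝ} (hH : ContinuousOn H (Icc 0 b)) {x : ℝ}
    (hx : x ∈ Icc 0 b) (j : ℕ) :
    ContinuousOn (fun t => t ^ j * H (x * t)) (Icc (0:ℝ) 1) := by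
  apply ContinuousOn.mul (by fun_prop)
  exact hH.comp (by fun_prop) (fun t ht => mul_mem_Icc hx ht)

lemma intInt {b : ℝ} {H : ℝ → ℝ} (hH : ContinuousOn H (Icc 0 b)) {x : ℝ}
    (hx : x ∈ Icc 0 b) (j : ℕ) :
    IntervalIntegrable (fun t => t ^ j * H (x * t)) volume 0 1 := by
  apply ContinuousOn.intervalIntegrable
  rw [uIcc_of_le (by norm_num : (0:ℝ) ≤ 1)]
  exact contOn_comp hH hx j

lemma bint_hasDerivWithinAt {b : ℝ} (hb : 0 < b) {H : ℝ → ℝ}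
    (hH : ContDiffOn ℝ 1 H (Icc 0 b)) (j : ℕ) {x₀ : ℝ} (hx₀ : x₀ ∈ Icc 0 b) :
    HasDerivWithinAt (Bint j H) (Bint (j+1) (derivWithin H (Icc 0 b)) x₀) (Icc 0 b) x₀ := by
  set H₁ := derivWithin H (Icc 0 b) with hH₁def
  have hHc : ContinuousOn H (Icc 0 b) := hH.continuousOn
  have hH₁c : ContinuousOn H₁ (Icc 0 b) :=
    hH.continuousOn_derivWithin (uniqueDiffOn_Icc hb) le_rfl
  have hHd : DifferentiableOn ℝ H (Icc 0 b) := hH.differentiableOn one_ne_zero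
  obtain ⟨C, hC⟩ : ∃ C, ∀ y ∈ Icc 0 b, ‖H₁ y‖ ≤ C :=
    isCompact_Icc.exists_bound_of_continuousOn hH₁c
  have hC0 : (0:ℝ) ≤ C := le_trans (norm_nonneg _) (hC 0 (left_mem_Icc.2 hb.le))
  -- the difference quotient integrand
  set F : ℝ → ℝ → ℝ :=
    fun x t => (x - x₀)⁻¹ * (t ^ j * H (x * t) - t ^ j * H (x₀ * t)) with hFdef
  -- MVT key
  have key : ∀ x ∈ Icc 0 b, x ≠ x₀ → ∀ t ∈ Ioc (0:ℝ) 1, ∃ ξ ∈ Icc 0 b,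
      |ξ - x₀ * t| ≤ |x - x₀| ∧ F x t = t ^ (j+1) * H₁ ξ := by
    intro x hx hxne t ht
    have htI : t ∈ Icc (0:ℝ) 1 := Ioc_subset_Icc_self ht
    have hne : x * t ≠ x₀ * t := by
      intro h
      have : (x - x₀) * t = 0 := by ring_nf; linarith [h]
      rcases mul_eq_zero.1 this with h' | h'
      · exact hxne (by linarith [sub_eq_zero.1 h'])
      · exact ht.1.ne' h'
    set a := min (x * t) (x₀ * t) with hadef
    set c := max (x * t) (x₀ * t) with hcdef
    have hac : a < c := min_lt_max.2 hne
    have ha0 : 0 ≤ a := le_min (mul_mem_Icc hx htI).1 (mul_mem_Icc hx₀ htI).1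
    have hcb : c ≤ b := max_le (mul_mem_Icc hx htI).2 (mul_mem_Icc hx₀ htI).2
    have hsub : Icc a c ⊆ Icc 0 b := Icc_subset_Icc ha0 hcb
    obtain ⟨ξ, hξ, hslope⟩ := exists_hasDerivAt_eq_slope H H₁ hac (hHc.mono hsub)
      (fun y hy => hasDerivAt_interior hHd ⟨lt_of_le_of_lt ha0 hy.1, lt_of_lt_of_le hy.2 hcb⟩)
    have hξI : ξ ∈ Icc 0 b := hsub (Ioo_subset_Icc_self hξ)
    have hca : c - a = |x * t - x₀ * t| := by
      rw [abs_sub_comm]; exact max_sub_min_eq_abs _ _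
    have hdiff : H c - H a = H₁ ξ * (c - a) := by
      rw [hslope, div_mul_cancel₀ _ (sub_ne_zero.2 hac.ne')]
    have hkey2 : H (x * t) - H (x₀ * t) = H₁ ξ * (x * t - x₀ * t) := by
      rcases le_total (x₀ * t) (x * t) with hle | hle
      · have h1 : a = x₀ * t := min_eq_right hle
        have h2 : c = x * t := max_eq_left hle
        rw [h1, h2] at hdiff; linarith [hdiff]
      · have h1 : a = x * t := min_eq_left hle
        have h2 : c = x₀ * t := max_eq_right hle
        rw [h1, h2] at hdiff; nlinarith [hdiff]
    refine ⟨ξ, hξI, ?_, ?_⟩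
    · have h1 : |ξ - x₀ * t| ≤ c - a := by
        have := hξ.1; have := hξ.2
        have h3 : a ≤ x₀ * t := min_le_right _ _
        have h4 : x₀ * t ≤ c := le_max_right _ _
        rw [abs_le]; constructor <;> nlinarith
      have h2 : c - a ≤ |x - x₀| := by
        rw [hca]
        have : x * t - x₀ * t = (x - x₀) * t := by ring
        rw [this, abs_mul, abs_of_nonneg ht.1.le]
        exact mul_le_of_le_one_right (abs_nonneg _) ht.2
      linarith
    · have hx0 : x - x₀ ≠ 0 := sub_ne_zero.2 hxne
      rw [hFdef]
      simp only
      have : t ^ j * H (x * t) - t ^ j * H (x₀ * t) = t ^ j * (H (x * t) - H (x₀ * t)) := by ring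
      rw [this, hkey2]
      field_simp
      ring
  -- the tendsto statement via dominated convergence
  have hmain : Tendsto (fun x => ∫ t in (0:ℝ)..1, F x t) (nhdsWithin x₀ (Icc 0 b \ {x₀}))
      (nhds (Bint (j+1) H₁ x₀)) := by
    have : Bint (j+1) H₁ x₀ = ∫ t in (0:ℝ)..1, t ^ (j+1) * H₁ (x₀ * t) := rfl
    rw [this]
    apply intervalIntegral.tendsto_integral_filter_of_dominated_convergence (fun _ => C)
    · filter_upwards [self_mem_nhdsWithin] with x hx
      have hcont : ContinuousOn (F x) (Icc (0:ℝ) 1) := by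
        apply ContinuousOn.mul continuousOn_const
        exact (contOn_comp hHc hx.1 j).sub (contOn_comp hHc hx₀ j)
      exact (hcont.mono (by rw [uIoc_of_le (by norm_num : (0:ℝ) ≤ 1)]; exact Ioc_subset_Icc_self)).aestronglyMeasurable measurableSet_uIoc
    · filter_upwards [self_mem_nhdsWithin] with x hx
      apply Filter.Eventually.of_forall
      intro t ht
      rw [uIoc_of_le (by norm_num : (0:ℝ) ≤ 1)] at ht
      obtain ⟨ξ, hξI, _, hFeq⟩ := key x hx.1 (by simpa using hx.2) t ht
      rw [hFeq, norm_mul]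
      calc ‖t ^ (j+1)‖ * ‖H₁ ξ‖ ≤ 1 * C := by
            apply mul_le_mul _ (hC ξ hξI) (norm_nonneg _) zero_le_one
            rw [Real.norm_eq_abs, abs_pow, abs_of_nonneg ht.1.le]
            exact pow_le_one₀ ht.1.le ht.2
        _ = C := one_mul C
    · exact intervalIntegrable_const
    · apply Filter.Eventually.of_forall
      intro t ht
      rw [uIoc_of_le (by norm_num : (0:ℝ) ≤ 1)] at ht
      rw [Metric.tendsto_nhdsWithin_nhds]
      intro ε hε
      have hx₀t : x₀ * t ∈ Icc 0 b := mul_mem_Icc hx₀ (Ioc_subset_Icc_self ht)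
      have hcw : ContinuousWithinAt H₁ (Icc 0 b) (x₀ * t) := hH₁c (x₀ * t) hx₀t
      rw [Metric.continuousWithinAt_iff] at hcw
      obtain ⟨δ, hδ, hδ'⟩ := hcw ε hε
      refine ⟨δ, hδ, ?_⟩
      intro x hx hdist
      obtain ⟨ξ, hξI, hξd, hFeq⟩ := key x hx.1 (by simpa using hx.2) t ht
      rw [hFeq]
      have hdξ : dist ξ (x₀ * t) < δ := by
        rw [Real.dist_eq]
        rw [Real.dist_eq] at hdist
        exact lt_of_le_of_lt hξd hdist
      have h1 := hδ' hξI hdξ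
      rw [Real.dist_eq] at h1 ⊢
      have : t ^ (j+1) * H₁ ξ - t ^ (j+1) * H₁ (x₀ * t) = t ^ (j+1) * (H₁ ξ - H₁ (x₀ * t)) := by
        ring
      rw [this, abs_mul]
      calc |t ^ (j+1)| * |H₁ ξ - H₁ (x₀ * t)| ≤ 1 * |H₁ ξ - H₁ (x₀ * t)| := by
            apply mul_le_mul_of_nonneg_right _ (abs_nonneg _)
            rw [abs_pow, abs_of_nonneg ht.1.le]
            exact pow_le_one₀ ht.1.le ht.2
        _ = |H₁ ξ - H₁ (x₀ * t)| := one_mul _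
        _ < ε := h1
  -- convert to slope
  rw [hasDerivWithinAt_iff_tendsto_slope]
  apply hmain.congr'
  filter_upwards [self_mem_nhdsWithin] with x hx
  have hxne : x ≠ x₀ := by simpa using hx.2
  have hx0 : x - x₀ ≠ 0 := sub_ne_zero.2 hxne
  rw [slope_def_field]
  rw [hFdef]
  simp only
  rw [intervalIntegral.integral_const_mul]
  rw [intervalIntegral.integral_sub (intInt hHc hx.1 j) (intInt hHc hx₀ j)]
  show (x - x₀)⁻¹ * (Bint j H x - Bint j H x₀) = _
  field_simp


lemma bint_continuousOn {b : ℝ} (hb : 0 < b) (j : ℕ) {H : ℝ → ℝ}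
    (hH : ContinuousOn H (Icc 0 b)) : ContinuousOn (Bint j H) (Icc 0 b) := by
  obtain ⟨C, hC⟩ : ∃ C, ∀ y ∈ Icc 0 b, ‖H y‖ ≤ C :=
    isCompact_Icc.exists_bound_of_continuousOn hH
  intro x₀ hx₀
  have : Bint j H x₀ = ∫ t in (0:ℝ)..1, t ^ j * H (x₀ * t) := rfl
  unfold ContinuousWithinAt
  rw [this]
  apply intervalIntegral.tendsto_integral_filter_of_dominated_convergence (fun _ => C)
  · filter_upwards [self_mem_nhdsWithin] with x hx
    exact ((contOn_comp hH hx j).mono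
      (by rw [uIoc_of_le (by norm_num : (0:ℝ) ≤ 1)]; exact Ioc_subset_Icc_self)).aestronglyMeasurable
      measurableSet_uIoc
  · filter_upwards [self_mem_nhdsWithin] with x hx
    apply Filter.Eventually.of_forall
    intro t ht
    rw [uIoc_of_le (by norm_num : (0:ℝ) ≤ 1)] at ht
    rw [norm_mul]
    calc ‖t ^ j‖ * ‖H (x * t)‖ ≤ 1 * C := by
          apply mul_le_mul _ (hC _ (mul_mem_Icc hx (Ioc_subset_Icc_self ht))) (norm_nonneg _)
            zero_le_one
          rw [Real.norm_eq_abs, abs_pow, abs_of_nonneg ht.1.le]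
          exact pow_le_one₀ ht.1.le ht.2
      _ = C := one_mul C
  · exact intervalIntegrable_const
  · apply Filter.Eventually.of_forall
    intro t ht
    rw [uIoc_of_le (by norm_num : (0:ℝ) ≤ 1)] at ht
    apply Filter.Tendsto.const_mul
    have h1 : Tendsto (fun x : ℝ => x * t) (nhdsWithin x₀ (Icc 0 b))
        (nhdsWithin (x₀ * t) (Icc 0 b)) := by
      rw [tendsto_nhdsWithin_iff]
      constructor
      · exact ((continuous_id.mul continuous_const).continuousAt).tendsto.mono_left
          nhdsWithin_le_nhds
      · filter_upwards [self_mem_nhdsWithin] with x hx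
        exact mul_mem_Icc hx (Ioc_subset_Icc_self ht)
    exact (hH (x₀ * t) (mul_mem_Icc hx₀ (Ioc_subset_Icc_self ht))).tendsto.comp h1

lemma bint_contDiffOn {b : ℝ} (hb : 0 < b) : ∀ (n : ℕ) (j : ℕ) (H : ℝ → ℝ),
    ContDiffOn ℝ n H (Icc 0 b) → ContDiffOn ℝ n (Bint j H) (Icc 0 b) := by
  intro n
  induction n with
  | zero =>
    intro j H hH
    rw [Nat.cast_zero, contDiffOn_zero] at hH ⊢
    exact bint_continuousOn hb j hH
  | succ n ih =>
    intro j H hH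
    have hud := uniqueDiffOn_Icc hb
    have hcast : ((n+1 : ℕ) : WithTop ℕ∞) = (n : WithTop ℕ∞) + 1 := by
      push_cast; ring
    rw [hcast] at hH ⊢
    have hH1 : ContDiffOn ℝ 1 H (Icc 0 b) := by
      apply hH.of_le
      exact_mod_cast le_add_self    -- 1 ≤ n + 1
    rw [contDiffOn_succ_iff_derivWithin hud]
    refine ⟨fun x hx => (bint_hasDerivWithinAt hb hH1 j hx).differentiableWithinAt, ?_, ?_⟩
    · intro h; exact absurd h (by simp)
    · have hHd : ContDiffOn ℝ n (derivWithin H (Icc 0 b)) (Icc 0 b) :=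
        hH.derivWithin hud le_rfl
      apply (ih (j+1) _ hHd).congr
      intro x hx
      exact (bint_hasDerivWithinAt hb hH1 j hx).derivWithin (hud x hx)


lemma bint_at_zero (H : ℝ → ℝ) : Bint 0 H 0 = H 0 := by
  unfold Bint
  simp

lemma bint_eq_div {b : ℝ} (hb : 0 < b) {H : ℝ → ℝ} (hH : ContDiffOn ℝ 1 H (Icc 0 b))
    {x : ℝ} (hx : x ∈ Ioc 0 b) :
    Bint 0 (derivWithin H (Icc 0 b)) x = (H x - H 0) / x := by
  set H₁ := derivWithin H (Icc 0 b) with hH₁def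
  have hIcc : Icc 0 x ⊆ Icc 0 b := Icc_subset_Icc le_rfl hx.2
  have h1 : ∫ s in (0:ℝ)..x, H₁ s = H x - H 0 := by
    apply intervalIntegral.integral_eq_sub_of_hasDeriv_right_of_le hx.1.le
      (hH.continuousOn.mono hIcc)
    · intro y hy
      exact (hasDerivAt_interior (hH.differentiableOn one_ne_zero)
        ⟨hy.1, lt_of_lt_of_le hy.2 hx.2⟩).hasDerivWithinAt
    · apply ContinuousOn.intervalIntegrable
      apply (hH.continuousOn_derivWithin (uniqueDiffOn_Icc hb) le_rfl).mono
      rw [uIcc_of_le hx.1.le]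
      exact hIcc
  have h2 : Bint 0 H₁ x = x⁻¹ • ∫ s in (0:ℝ)..x, H₁ s := by
    unfold Bint
    simp only [pow_zero, one_mul]
    rw [intervalIntegral.integral_comp_mul_left _ hx.1.ne']
    norm_num
  rw [h2, h1, smul_eq_mul]
  ring

lemma hopf {N : ℕ} (hN : 3 ≤ N) {b : ℝ} (hb : 0 < b) {v : ℝ → ℝ}
    (hd1 : ∀ r ∈ Ioo 0 b, HasDerivAt v (deriv v r) r)
    (hd2 : ∀ r ∈ Ioo 0 b, HasDerivAt (deriv v) (deriv (deriv v) r) r)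
    (hQ : ∀ r ∈ Ioo 0 b, deriv (deriv v) r + ((N:ℝ)-1)/r * deriv v r ≤ 0)
    (hv0 : Tendsto v (nhdsWithin 0 (Ioi 0)) (nhds 0)) :
    ∀ r ∈ Ioo 0 b, v r ≤ 0 := by
  set g := fun r : ℝ => r ^ (N-1) * deriv v r with hgdef
  have hNR : (2:ℝ) < (N:ℝ) := by exact_mod_cast lt_of_lt_of_le (by norm_num) hN
  have hg : ∀ r ∈ Ioo 0 b,
      HasDerivAt g (r ^ (N-1) * (deriv (deriv v) r + ((N:ℝ)-1)/r * deriv v r)) r := by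
    intro r hr
    have hrne : r ≠ 0 := hr.1.ne'
    have h1 : HasDerivAt (fun r : ℝ => r ^ (N-1)) (((N-1 : ℕ):ℝ) * r ^ (N-2)) r := by
      have := hasDerivAt_pow (N-1) r
      rw [show N - 1 - 1 = N - 2 by omega] at this; exact this
    have h2 := h1.mul (hd2 r hr)
    refine h2.congr_deriv ?_
    have hc : ((N-1 : ℕ):ℝ) = (N:ℝ) - 1 := by
      have : (1:ℕ) ≤ N := by omega
      push_cast [Nat.cast_sub this]
      ring
    have hpow : r ^ (N-1) = r ^ (N-2) * r := by
      rw [← pow_succ]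
      congr 1
      omega
    rw [hc, hpow]
    field_simp
    ring
  have hganti : AntitoneOn g (Ioo 0 b) := by
    apply antitoneOn_of_deriv_nonpos (convex_Ioo 0 b)
    · exact fun r hr => (hg r hr).differentiableAt.continuousAt.continuousWithinAt
    · rw [interior_Ioo]
      exact fun r hr => (hg r hr).differentiableAt.differentiableWithinAt
    · rw [interior_Ioo]
      intro r hr
      rw [(hg r hr).deriv]
      have := hQ r hr
      nlinarith [pow_nonneg hr.1.le (N-1)]
  have gnp : ∀ r ∈ Ioo 0 b, g r ≤ 0 := by
    intro r0 hr0
    by_contra hpos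
    push_neg at hpos
    set c := g r0 with hcdef
    have hgs : ∀ s ∈ Ioc 0 r0, c ≤ g s := fun s hs =>
      hganti ⟨hs.1, lt_of_le_of_lt hs.2 hr0.2⟩ hr0 hs.2
    set φ := fun s : ℝ => v s + c/((N:ℝ)-2) * (s ^ (N-2))⁻¹ with hφdef
    have hφd : ∀ s ∈ Ioo 0 b, HasDerivAt φ (deriv v s - c * (s ^ (N-1))⁻¹) s := by
      intro s hs
      have hsne : s ≠ 0 := hs.1.ne'
      have h1 : HasDerivAt (fun s : ℝ => (s ^ (N-2))⁻¹)
          (-(((N-2:ℕ):ℝ) * s ^ (N-3)) / (s ^ (N-2))^2) s :=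
        (hasDerivAt_pow (N-2) s).inv (pow_ne_zero _ hsne)
      have h1' := (h1.const_mul (c/((N:ℝ)-2)))
      have h2 := (hd1 s hs).add h1'
      refine h2.congr_deriv ?_
      have e1 : (s ^ (N-2))^2 = s ^ (N-3) * s ^ (N-1) := by
        rw [← pow_mul, ← pow_add]
        congr 1
        omega
      have hc2 : ((N-2 : ℕ):ℝ) = (N:ℝ) - 2 := by
        have : (2:ℕ) ≤ N := by omega
        push_cast [Nat.cast_sub this]
        ring
      rw [e1, hc2]
      have hs3 : s ^ (N-3) ≠ 0 := pow_ne_zero _ hsne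
      have hs1 : s ^ (N-1) ≠ 0 := pow_ne_zero _ hsne
      have hX : (N:ℝ) - 2 ≠ 0 := by linarith
      field_simp
      ring
    have hφmono : MonotoneOn φ (Ioc 0 r0) := by
      apply monotoneOn_of_deriv_nonneg (convex_Ioc 0 r0)
      · intro s hs
        exact (hφd s ⟨hs.1, lt_of_le_of_lt hs.2 hr0.2⟩).differentiableAt.continuousAt.continuousWithinAt
      · rw [interior_Ioc]
        intro s hs
        exact (hφd s ⟨hs.1, lt_trans hs.2 hr0.2⟩).differentiableAt.differentiableWithinAt
      · rw [interior_Ioc]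
        intro s hs
        have hsb : s ∈ Ioo 0 b := ⟨hs.1, lt_trans hs.2 hr0.2⟩
        rw [(hφd s hsb).deriv]
        have h3 : c ≤ g s := hgs s (Ioo_subset_Ioc_self hs)
        have hsp : (0:ℝ) < s ^ (N-1) := pow_pos hs.1 _
        rw [hgdef] at h3
        simp only at h3
        rw [sub_nonneg, ← div_eq_mul_inv, div_le_iff₀ hsp]
        nlinarith
    have hφb : ∀ s ∈ Ioc 0 r0, φ s ≤ φ r0 :=
      fun s hs => hφmono hs (right_mem_Ioc.2 hr0.1) hs.2
    have htop : Tendsto φ (nhdsWithin 0 (Ioi 0)) atTop := by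
      apply Filter.Tendsto.add_atTop hv0
      apply Filter.Tendsto.const_mul_atTop (div_pos hpos (by linarith))
      have h1 : Tendsto (fun s : ℝ => s ^ (N-2)) (nhdsWithin 0 (Ioi 0))
          (nhdsWithin 0 (Ioi 0)) := by
        rw [tendsto_nhdsWithin_iff]
        constructor
        · have h2 : Tendsto (fun s : ℝ => s ^ (N-2)) (nhds 0) (nhds ((0:ℝ) ^ (N-2))) :=
            (continuous_pow (N-2)).tendsto 0
          rw [zero_pow (by omega : N - 2 ≠ 0)] at h2
          exact h2.mono_left nhdsWithin_le_nhds
        · filter_upwards [self_mem_nhdsWithin] with s hs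
          exact pow_pos (mem_Ioi.mp hs) _
      exact tendsto_inv_nhdsGT_zero.comp h1
    have hev1 : ∀ᶠ s in nhdsWithin 0 (Ioi 0), φ r0 < φ s :=
      htop.eventually_gt_atTop (φ r0)
    have hev2 : ∀ᶠ s in nhdsWithin 0 (Ioi 0), s ∈ Ioc 0 r0 :=
      Filter.eventually_of_mem (Ioc_mem_nhdsGT hr0.1) (fun s hs => hs)
    obtain ⟨s, hs1, hs2⟩ := (hev1.and hev2).exists
    exact absurd (hφb s hs2) (not_le.2 hs1)
  -- from g ≤ 0, deriv v ≤ 0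
  have hdnp : ∀ r ∈ Ioo 0 b, deriv v r ≤ 0 := by
    intro r hr
    have h1 := gnp r hr
    rw [hgdef] at h1
    simp only at h1
    nlinarith [pow_pos hr.1 (N-1)]
  have hvanti : AntitoneOn v (Ioo 0 b) := by
    apply antitoneOn_of_deriv_nonpos (convex_Ioo 0 b)
    · exact fun r hr => (hd1 r hr).differentiableAt.continuousAt.continuousWithinAt
    · rw [interior_Ioo]
      exact fun r hr => (hd1 r hr).differentiableAt.differentiableWithinAt
    · rw [interior_Ioo]
      exact hdnp
  intro r hr
  have hev : ∀ᶠ s in nhdsWithin 0 (Ioi 0), v r ≤ v s := by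
    filter_upwards [Ioc_mem_nhdsGT hr.1] with s hs
    exact hvanti ⟨hs.1, lt_of_le_of_lt hs.2 hr.2⟩ hr hs.2
  exact ge_of_tendsto hv0 hev


lemma nhdsGT_le {b : ℝ} (hb : 0 < b) : nhdsWithin (0:ℝ) (Ioi 0) ≤ nhdsWithin 0 (Icc 0 b) := by
  rw [nhdsWithin_le_iff]
  exact Filter.mem_of_superset (Ioc_mem_nhdsGT hb) Ioc_subset_Icc_self

lemma tendsto_of_repr {v h : ℝ → ℝ} {b : ℝ} {k : ℕ} (hb : 0 < b)
    (hsm : ContDiffOn ℝ (k:ℕ) h (Icc 0 b)) (heq : ∀ r ∈ Ico 0 b, v r = h r)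
    (hv0 : v 0 = 0) : Tendsto v (nhdsWithin 0 (Ioi 0)) (nhds 0) := by
  have h0 : h 0 = 0 := by rw [← heq 0 ⟨le_rfl, hb⟩]; exact hv0
  have hc : ContinuousWithinAt h (Icc 0 b) 0 :=
    hsm.continuousOn 0 (left_mem_Icc.2 hb.le)
  have ht : Tendsto h (nhdsWithin 0 (Ioi 0)) (nhds 0) := by
    have h2 := hc.tendsto.mono_left (nhdsGT_le hb)
    rw [h0] at h2
    exact h2
  apply ht.congr'
  filter_upwards [Ioo_mem_nhdsGT hb] with s hs
  exact (heq s ⟨hs.1.le, hs.2⟩).symm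

section Repr

variable {m N : ℕ} {b : ℝ} {w : ℝ → ℝ}

lemma repr (hN : 3 ≤ N) (hb : 0 < b)
    (hw : ContDiffOn ℝ (2*m : ℕ) w (Icc 0 b))
    (hval : ∀ i < m, (rlap N)^[i] w 0 = 0)
    (hder : ∀ i < m, derivWithin ((rlap N)^[i] w) (Ici 0) 0 = 0) :
    ∀ i < m, ∃ h : ℝ → ℝ, ContDiffOn ℝ (2*(m-i) : ℕ) h (Icc 0 b) ∧
      ∀ r ∈ Ico 0 b, (rlap N)^[i] w r = h r := by
  have hud := uniqueDiffOn_Icc hb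
  intro i
  induction i with
  | zero =>
    intro _
    refine ⟨w, ?_, fun r _ => rfl⟩
    simpa using hw
  | succ i ih =>
    intro hi1
    obtain ⟨h, hsm, heq⟩ := ih (by omega)
    set v := (rlap N)^[i] w with hvdef
    set k := 2*(m-i) with hkdef
    have hk4 : 4 ≤ k := by omega
    set h₁ := derivWithin h (Icc 0 b) with hh₁def
    set h₂ := derivWithin h₁ (Icc 0 b) with hh₂def
    have hsm1 : ContDiffOn ℝ (k-1 : ℕ) h₁ (Icc 0 b) := by
      apply hsm.derivWithin hud
      have e : (k-1:ℕ)+1 = k := by omega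
      exact_mod_cast le_of_eq (by exact_mod_cast e)
    have hsm2 : ContDiffOn ℝ (k-2 : ℕ) h₂ (Icc 0 b) := by
      apply hsm1.derivWithin hud
      have e : (k-2:ℕ)+1 = k-1 := by omega
      exact_mod_cast le_of_eq (by exact_mod_cast e)
    have hsmd : DifferentiableOn ℝ h (Icc 0 b) :=
      hsm.differentiableOn (by exact_mod_cast (by omega : k ≠ 0))
    have hsm1d : DifferentiableOn ℝ h₁ (Icc 0 b) :=
      hsm1.differentiableOn (by exact_mod_cast (by omega : k-1 ≠ 0))
    -- interior facts
    have hvh : ∀ r ∈ Ioo 0 b, HasDerivAt v (h₁ r) r := by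
      intro r hr
      apply (hasDerivAt_interior hsmd hr).congr_of_eventuallyEq
      filter_upwards [Ioo_mem_nhds hr.1 hr.2] with s hs
      exact heq s ⟨hs.1.le, hs.2⟩
    have hdv : ∀ r ∈ Ioo 0 b, deriv v r = h₁ r := fun r hr => (hvh r hr).deriv
    have hvh2 : ∀ r ∈ Ioo 0 b, HasDerivAt (deriv v) (h₂ r) r := by
      intro r hr
      apply (hasDerivAt_interior hsm1d hr).congr_of_eventuallyEq
      filter_upwards [Ioo_mem_nhds hr.1 hr.2] with s hs
      exact hdv s hs
    have hddv : ∀ r ∈ Ioo 0 b, deriv (deriv v) r = h₂ r := fun r hr => (hvh2 r hr).deriv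
    -- boundary values
    have hsetIccIco : Icc (0:ℝ) b =ᶠ[nhds (0:ℝ)] Ico 0 b := by
      rw [Filter.eventuallyEq_set]
      filter_upwards [Iio_mem_nhds hb] with x hx
      simp only [mem_Icc, mem_Ico]
      exact and_congr_right fun _ => ⟨fun _ => hx, fun h => h.le⟩
    have hsetIcoIci : Ico (0:ℝ) b =ᶠ[nhds (0:ℝ)] Ici 0 := by
      rw [Filter.eventuallyEq_set]
      filter_upwards [Iio_mem_nhds hb] with x hx
      simp only [mem_Ico, mem_Ici]
      exact ⟨fun h => h.1, fun h => ⟨h, hx⟩⟩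
    have hh₁0 : h₁ 0 = 0 := by
      show derivWithin h (Icc 0 b) 0 = 0
      rw [derivWithin_congr_set hsetIccIco,
        derivWithin_congr (fun s hs => (heq s hs).symm) ((heq 0 ⟨le_rfl, hb⟩).symm),
        derivWithin_congr_set hsetIcoIci]
      exact hder i (by omega)
    -- the quotient function
    set q := Bint 0 h₂ with hqdef
    have hq : ContDiffOn ℝ (k-2 : ℕ) q (Icc 0 b) := bint_contDiffOn hb (k-2) 0 h₂ hsm2
    set h' := fun r : ℝ => h₂ r + ((N:ℝ)-1) * q r with hh'def
    have hsm' : ContDiffOn ℝ (k-2 : ℕ) h' (Icc 0 b) := hsm2.add (contDiffOn_const.mul hq)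
    have hqeq : ∀ r ∈ Ioo 0 b, q r = h₁ r / r := by
      intro r hr
      rw [hqdef, hh₂def,
        bint_eq_div hb (hsm1.of_le (by exact_mod_cast (by omega : 1 ≤ k-1))) ⟨hr.1, hr.2.le⟩,
        hh₁0, sub_zero]
    have heq' : ∀ r ∈ Ioo 0 b, (rlap N)^[i+1] w r = h' r := by
      intro r hr
      rw [Function.iterate_succ_apply', ← hvdef]
      show (if r = 0 then _ else _) = h' r
      rw [if_neg hr.1.ne']
      rw [hddv r hr, hdv r hr, hh'def]
      simp only
      rw [hqeq r hr]
      ring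
    have hlim : Tendsto ((rlap N)^[i+1] w) (nhdsWithin 0 (Ioi 0)) (nhds (h' 0)) := by
      have hth' : Tendsto h' (nhdsWithin 0 (Ioi 0)) (nhds (h' 0)) :=
        (hsm'.continuousOn 0 (left_mem_Icc.2 hb.le)).tendsto.mono_left (nhdsGT_le hb)
      apply Filter.Tendsto.congr' _ hth'
      filter_upwards [Ioo_mem_nhdsGT hb] with s hs
      exact (heq' s hs).symm
    have hval1 : (rlap N)^[i+1] w 0 = h' 0 := by
      have hexpr : Tendsto (fun s => deriv (deriv v) s + ((N:ℝ)-1)/s * deriv v s)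
          (nhdsWithin 0 (Ioi 0)) (nhds (h' 0)) := by
        apply Filter.Tendsto.congr' _ hlim
        filter_upwards [Ioo_mem_nhdsGT hb] with s hs
        rw [Function.iterate_succ_apply', ← hvdef]
        show (if s = 0 then _ else _) = _
        rw [if_neg hs.1.ne']
      rw [Function.iterate_succ_apply', ← hvdef]
      show (if (0:ℝ) = 0 then _ else _) = h' 0
      rw [if_pos rfl]
      exact hexpr.limUnder_eq
    have hh'0 : h' 0 = 0 := by rw [← hval1]; exact hval (i+1) hi1
    refine ⟨h', ?_, ?_⟩
    · have e : (2*(m-(i+1)) : ℕ) = k-2 := by omega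
      rw [e]
      exact hsm'
    · intro r hr
      rcases eq_or_lt_of_le hr.1 with h0 | h0
      · rw [← h0]
        exact hval1
      · exact heq' r ⟨h0, hr.2⟩

end Repr

lemma interior_derivs {b : ℝ} (hb : 0 < b) {v h : ℝ → ℝ} {k : ℕ} (hk : 2 ≤ k)
    (hsm : ContDiffOn ℝ (k:ℕ) h (Icc 0 b)) (heq : ∀ r ∈ Ico 0 b, v r = h r) :
    (∀ r ∈ Ioo 0 b, HasDerivAt v (deriv v r) r) ∧
      (∀ r ∈ Ioo 0 b, HasDerivAt (deriv v) (deriv (deriv v) r) r) := by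
  have hud := uniqueDiffOn_Icc hb
  set h₁ := derivWithin h (Icc 0 b) with hh₁def
  have hsm1 : ContDiffOn ℝ (k-1 : ℕ) h₁ (Icc 0 b) := by
    apply hsm.derivWithin hud
    have e : (k-1:ℕ)+1 = k := by omega
    exact_mod_cast le_of_eq (by exact_mod_cast e)
  have hsmd : DifferentiableOn ℝ h (Icc 0 b) :=
    hsm.differentiableOn (by exact_mod_cast (by omega : k ≠ 0))
  have hsm1d : DifferentiableOn ℝ h₁ (Icc 0 b) :=
    hsm1.differentiableOn (by exact_mod_cast (by omega : k-1 ≠ 0))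
  have hvh : ∀ r ∈ Ioo 0 b, HasDerivAt v (h₁ r) r := by
    intro r hr
    apply (hasDerivAt_interior hsmd hr).congr_of_eventuallyEq
    filter_upwards [Ioo_mem_nhds hr.1 hr.2] with s hs
    exact heq s ⟨hs.1.le, hs.2⟩
  have hdv : ∀ r ∈ Ioo 0 b, deriv v r = h₁ r := fun r hr => (hvh r hr).deriv
  have hvh2 : ∀ r ∈ Ioo 0 b, HasDerivAt (deriv v) (derivWithin h₁ (Icc 0 b) r) r := by
    intro r hr
    apply (hasDerivAt_interior hsm1d hr).congr_of_eventuallyEq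
    filter_upwards [Ioo_mem_nhds hr.1 hr.2] with s hs
    exact hdv s hs
  constructor
  · intro r hr
    rw [hdv r hr]
    exact hvh r hr
  · intro r hr
    rw [(hvh2 r hr).deriv]
    exact hvh2 r hr

lemma main_interval {m N : ℕ} (hm : 1 ≤ m) (hN : 3 ≤ N) {b : ℝ} (hb : 0 < b) {w : ℝ → ℝ}
    (hw : ContDiffOn ℝ (2*m : ℕ) w (Icc 0 b))
    (hineq : ∀ r ∈ Ioo 0 b, (rlap N)^[m] w r ≤ 0)
    (hval : ∀ i < m, (rlap N)^[i] w 0 = 0)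
    (hder : ∀ i < m, derivWithin ((rlap N)^[i] w) (Ici 0) 0 = 0) :
    ∀ i < m, ∀ r ∈ Ioo 0 b, (rlap N)^[i] w r ≤ 0 := by
  have hrepr := repr hN hb hw hval hder
  have key : ∀ d i, i + d = m → i < m → ∀ r ∈ Ioo 0 b, (rlap N)^[i] w r ≤ 0 := by
    intro d
    induction d with
    | zero => intro i hi hlt; exact absurd hi (by omega)
    | succ d ih =>
      intro i hi hlt r hr
      obtain ⟨h, hsm, heq⟩ := hrepr i hlt
      obtain ⟨hd1, hd2⟩ := interior_derivs hb (by omega : 2 ≤ 2*(m-i)) hsm heq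
      have hQ : ∀ s ∈ Ioo 0 b,
          deriv (deriv ((rlap N)^[i] w)) s + ((N:ℝ)-1)/s * deriv ((rlap N)^[i] w) s ≤ 0 := by
        intro s hs
        have h1 : (rlap N)^[i+1] w s ≤ 0 := by
          rcases Nat.eq_or_lt_of_le (Nat.succ_le_of_lt hlt) with he | hlt2
          · have he' : i + 1 = m := he
            rw [he']
            exact hineq s hs
          · exact ih (i+1) (by omega) hlt2 s hs
        rw [Function.iterate_succ_apply'] at h1
        have h2 : rlap N ((rlap N)^[i] w) s =
            deriv (deriv ((rlap N)^[i] w)) s + ((N:ℝ)-1)/s * deriv ((rlap N)^[i] w) s := by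
          show (if s = 0 then _ else _) = _
          rw [if_neg hs.1.ne']
        rw [h2] at h1
        exact h1
      have hv0 : Tendsto ((rlap N)^[i] w) (nhdsWithin 0 (Ioi 0)) (nhds 0) :=
        tendsto_of_repr hb hsm heq (hval i hlt)
      exact hopf hN hb hd1 hd2 hQ hv0 r hr
  intro i hlt r hr
  exact key (m - i) i (by omega) hlt r hr

end RadAux

/-- Let `m ≥ 1`, `N ≥ 3`, `R ∈ (0,∞]`, and `w ∈ C^{2m}([0,R))` with
`Δ_N^m w ≤ 0` on `(0,R)` and `(Δ_N^i w)(0) = 0`, `(Δ_N^i w)'(0) = 0` for `0 ≤ i ≤ m-1`.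
Then `Δ_N^i w ≤ 0` on `[0,R)` for every `0 ≤ i ≤ m-1`; in particular `w ≤ 0`. -/
theorem iterated_radial_laplacian_nonpos
    (m N : ℕ) (hm : 1 ≤ m) (hN : 3 ≤ N) (R : ℝ≥0∞) (hR : 0 < R)
    (w : ℝ → ℝ)
    (hw : ContDiffOn ℝ (2*m : ℕ) w {r : ℝ | 0 ≤ r ∧ ENNReal.ofReal r < R})
    (hineq : ∀ r : ℝ, 0 < r → ENNReal.ofReal r < R → (rlap N)^[m] w r ≤ 0)
    (hval : ∀ i < m, (rlap N)^[i] w 0 = 0)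
    (hder : ∀ i < m, derivWithin ((rlap N)^[i] w) (Set.Ici 0) 0 = 0) :
    ∀ i < m, ∀ r : ℝ, 0 ≤ r → ENNReal.ofReal r < R → (rlap N)^[i] w r ≤ 0 := by
  intro i hlt r hr0 hrR
  rcases eq_or_lt_of_le hr0 with h0 | h0
  · rw [← h0]
    exact le_of_eq (hval i hlt)
  · obtain ⟨b, hrb, hbR⟩ : ∃ b : ℝ, r < b ∧ ENNReal.ofReal b < R := by
      by_cases hT : R = ⊤
      · exact ⟨r + 1, by linarith, by rw [hT]; exact ENNReal.ofReal_lt_top⟩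
      · have h1 : r < R.toReal := by
          rw [← ENNReal.ofReal_lt_iff_lt_toReal hr0 hT]
          exact hrR
        refine ⟨(r + R.toReal)/2, by linarith, ?_⟩
        rw [ENNReal.ofReal_lt_iff_lt_toReal (by linarith) hT]
        linarith
    have hb : 0 < b := lt_trans h0 hrb
    have hsub : Icc 0 b ⊆ {r : ℝ | 0 ≤ r ∧ ENNReal.ofReal r < R} := by
      intro x hx
      exact ⟨hx.1, lt_of_le_of_lt (ENNReal.ofReal_le_ofReal hx.2) hbR⟩
    apply RadAux.main_interval hm hN hb (hw.mono hsub) _ hval hder i hlt r ⟨h0, hrb⟩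
    intro s hs
    exact hineq s hs.1 (lt_of_le_of_lt (ENNReal.ofReal_le_ofReal hs.2.le) hbR)
end

section
/- Let m ≥ 3 and N ≥ 3 be integers and let u ∈ C^{2m}([0,∞)) be the radial solution of Δ_N^m u = −e^u on (0,∞) with (Δ_N^i u)'(0) = 0 for all 0 ≤ i ≤ m−1 and with (Δ_N^{m−2} u)(0) = 0. Then lim_{r→∞} (Δ_N^{m−1} u)(r) exists in [−∞, 0), i.e. the limit is strictly negative (possibly −∞). -/
open MeasureTheory Filter Set
open scoped ENNReal

section RlapAux

noncomputable def Gn (n : ℕ) (φ : ℝ → ℝ) : ℝ → ℝ := fun r =>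
  if r = 0 then φ 0 / (n + 1) else (∫ s in (0:ℝ)..r, s ^ n * φ s) / r ^ (n + 1)
lemma Gn_of_ne {n : ℕ} {φ : ℝ → ℝ} {r : ℝ} (hr : r ≠ 0) :
    Gn n φ r = (∫ s in (0:ℝ)..r, s ^ n * φ s) / r ^ (n + 1) := if_neg hr
lemma integrable_pow_mul {φ : ℝ → ℝ} (hφ : ContinuousOn φ (Ici 0)) {r : ℝ} (hr : 0 ≤ r) (n : ℕ) :
    IntervalIntegrable (fun s => s ^ n * φ s) volume 0 r := by
  apply ContinuousOn.intervalIntegrable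
  exact ((continuous_pow n).continuousOn).mul (hφ.mono (by
    rw [uIcc_of_le hr]; exact fun x hx => hx.1))

lemma Gn_tendsto_zero {n : ℕ} {φ : ℝ → ℝ} (hφ : ContinuousOn φ (Ici 0)) :
    Tendsto (Gn n φ) (nhdsWithin 0 (Ioi 0)) (nhds (φ 0 / (n + 1))) := by
  rw [Metric.tendsto_nhdsWithin_nhds]
  intro ε hε
  obtain ⟨δ, hδ, hmod⟩ := Metric.continuousWithinAt_iff.mp (hφ 0 self_mem_Ici) (ε/2) (by linarith)
  refine ⟨δ, hδ, fun {x} hx hxd => ?_⟩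
  have hx0 : 0 < x := hx
  have hxpow : (0:ℝ) < x ^ (n+1) := pow_pos hx0 _
  rw [Gn_of_ne hx0.ne']
  have key : |(∫ s in (0:ℝ)..x, s ^ n * φ s) - φ 0 * (x ^ (n+1) / (n+1))| ≤ (ε/2) * x ^ (n+1) := by
    have hint1 := integrable_pow_mul hφ hx0.le n
    have hint2 : IntervalIntegrable (fun s => s ^ n * φ 0) volume 0 x := by
      apply ContinuousOn.intervalIntegrable
      exact ((continuous_pow n).continuousOn).mul continuousOn_const
    have e1 : φ 0 * (x ^ (n+1) / (n+1)) = ∫ s in (0:ℝ)..x, s ^ n * φ 0 := by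
      rw [intervalIntegral.integral_mul_const, integral_pow]
      ring
    rw [e1, ← intervalIntegral.integral_sub hint1 hint2]
    have hb : ∀ s ∈ Set.uIoc (0:ℝ) x, ‖s ^ n * φ s - s ^ n * φ 0‖ ≤ (ε/2) * x ^ n := by
      intro s hs
      rw [uIoc_of_le hx0.le] at hs
      have hs0 : 0 < s := hs.1
      have hsx : s ≤ x := hs.2
      have hsd : dist s 0 < δ := by
        rw [Real.dist_eq, sub_zero, abs_of_pos hs0]
        calc s ≤ x := hsx
        _ = |x| := (abs_of_pos hx0).symm
        _ = dist x 0 := by rw [Real.dist_eq, sub_zero]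
        _ < δ := hxd
      have hmods : dist (φ s) (φ 0) < ε/2 := hmod (le_of_lt hs0) hsd
      rw [← mul_sub, norm_mul]
      have : ‖s ^ n‖ ≤ x ^ n := by
        rw [Real.norm_eq_abs, abs_of_nonneg (pow_nonneg hs0.le n)]
        exact pow_le_pow_left₀ hs0.le hsx n
      calc ‖s ^ n‖ * ‖φ s - φ 0‖ ≤ x ^ n * (ε/2) := by
            apply mul_le_mul this _ (norm_nonneg _) (pow_nonneg hx0.le n)
            rw [Real.norm_eq_abs, ← Real.dist_eq]; exact hmods.le
        _ = (ε/2) * x ^ n := by ring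
    have := intervalIntegral.norm_integral_le_of_norm_le_const hb
    rw [sub_zero, abs_of_pos hx0] at this
    calc |∫ s in (0:ℝ)..x, (s ^ n * φ s - s ^ n * φ 0)| ≤ (ε/2) * x ^ n * x := this
      _ = (ε/2) * x ^ (n+1) := by ring
  rw [Real.dist_eq]
  have : (∫ s in (0:ℝ)..x, s ^ n * φ s) / x ^ (n + 1) - φ 0 / (n + 1)
      = ((∫ s in (0:ℝ)..x, s ^ n * φ s) - φ 0 * (x ^ (n+1) / (n+1))) / x ^ (n+1) := by
    field_simp
  rw [this, abs_div, abs_of_pos hxpow]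
  calc |(∫ s in (0:ℝ)..x, s ^ n * φ s) - φ 0 * (x ^ (n+1) / (n+1))| / x ^ (n+1)
      ≤ (ε/2 * x ^ (n+1)) / x ^ (n+1) := by
        exact div_le_div_of_nonneg_right key hxpow.le |>.trans_eq rfl
    _ = ε/2 := by field_simp
    _ < ε := by linarith

lemma primitive_hasDerivAt {φ : ℝ → ℝ} (hφ : ContinuousOn φ (Ici 0)) {r : ℝ} (hr : 0 < r) (n : ℕ) :
    HasDerivAt (fun x => ∫ s in (0:ℝ)..x, s ^ n * φ s) (r ^ n * φ r) r := by
  set ρ : ℝ → ℝ := fun s => s ^ n * φ s with hρ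
  have hcont : ContinuousOn ρ (Ici 0) :=
    ((continuous_pow n).continuousOn).mul hφ
  have hmeas : StronglyMeasurableAtFilter ρ (nhds r) volume :=
    ContinuousOn.stronglyMeasurableAtFilter isOpen_Ioi (hcont.mono Ioi_subset_Ici_self) r hr
  have hca : ContinuousAt ρ r :=
    hcont.continuousAt (Ici_mem_nhds hr)
  have hint : IntervalIntegrable ρ volume 0 r := integrable_pow_mul hφ hr.le n
  exact intervalIntegral.integral_hasDerivAt_right hint hmeas hca

lemma Gn_continuousOn {n : ℕ} {φ : ℝ → ℝ} (hφ : ContinuousOn φ (Ici 0)) :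
    ContinuousOn (Gn n φ) (Ici 0) := by
  intro r hr
  rcases eq_or_lt_of_le (mem_Ici.mp hr) with h0 | h0
  · subst h0
    unfold ContinuousWithinAt
    have hIci : Ici (0:ℝ) = {0} ∪ Ioi 0 := by
      ext x
      simp only [mem_Ici, mem_union, mem_singleton_iff, mem_Ioi]
      constructor
      · intro h; rcases eq_or_lt_of_le h with h|h
        · exact Or.inl h.symm
        · exact Or.inr h
      · rintro (h|h)
        · exact h.ge
        · exact h.le
    rw [hIci, nhdsWithin_union, tendsto_sup]
    have hval : Gn n φ 0 = φ 0 / (n+1) := if_pos rfl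
    constructor
    · rw [nhdsWithin_singleton, tendsto_pure_left]
      intro s hs
      exact mem_of_mem_nhds hs
    · rw [hval]
      exact Gn_tendsto_zero hφ
  · apply ContinuousAt.continuousWithinAt
    have hev : Gn n φ =ᶠ[nhds r] fun x => (∫ s in (0:ℝ)..x, s ^ n * φ s) / x ^ (n + 1) := by
      filter_upwards [isOpen_Ioi.mem_nhds h0] with x hx
      exact Gn_of_ne (ne_of_gt hx)
    rw [continuousAt_congr hev]
    exact ((primitive_hasDerivAt hφ h0 n).continuousAt).div
      ((continuous_pow (n+1)).continuousAt) (by positivity)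

lemma Gn_hasDerivAt {n : ℕ} {φ : ℝ → ℝ} (hφ : ContinuousOn φ (Ici 0)) {r : ℝ} (hr : 0 < r) :
    HasDerivAt (Gn n φ) ((φ r - (n + 1) * Gn n φ r) / r) r := by
  have hΨ := primitive_hasDerivAt hφ hr n
  have hpow : HasDerivAt (fun x : ℝ => x ^ (n+1)) ((n+1 : ℝ) * r ^ n) r := by
    simpa using hasDerivAt_pow (n+1) r
  have hdiv := hΨ.div hpow (by positivity)
  have hev : (fun x => (∫ s in (0:ℝ)..x, s ^ n * φ s) / x ^ (n + 1)) =ᶠ[nhds r] Gn n φ := by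
    filter_upwards [isOpen_Ioi.mem_nhds hr] with x hx
    exact (Gn_of_ne (ne_of_gt hx)).symm
  have := hdiv.congr_of_eventuallyEq hev.symm
  refine this.congr_deriv ?_
  rw [Gn_of_ne hr.ne']
  have hrp : (0:ℝ) < r ^ (n+1) := pow_pos hr _
  field_simp
  ring

lemma Gn_parts {n : ℕ} {φ : ℝ → ℝ} (hφ : ContDiffOn ℝ 1 φ (Ici 0)) {r : ℝ} (hr : 0 < r) :
    (φ r - (n + 1) * Gn n φ r) / r = Gn (n + 1) (derivWithin φ (Ici 0)) r := by
  set φ' := derivWithin φ (Ici 0) with hφ'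
  have hφc : ContinuousOn φ (Ici 0) := hφ.continuousOn
  have hφ'c : ContinuousOn φ' (Ici 0) := hφ.continuousOn_derivWithin (uniqueDiffOn_Ici 0) le_rfl
  -- the integration by parts identity
  have key : (∫ s in (0:ℝ)..r, s ^ (n+1) * φ' s) = r ^ (n+1) * φ r - (n+1) * ∫ s in (0:ℝ)..r, s ^ n * φ s := by
    set C : ℝ → ℝ := fun x => (∫ s in (0:ℝ)..x, s ^ (n+1) * φ' s) - x ^ (n+1) * φ x
      + (n+1) * ∫ s in (0:ℝ)..x, s ^ n * φ s with hC
    have hcont : ContinuousOn C (Icc 0 r) := by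
      have h1 : ContinuousOn (fun x => ∫ s in (0:ℝ)..x, s ^ (n+1) * φ' s) (Icc 0 r) := by
        have := intervalIntegral.continuousOn_primitive_interval'
          (integrable_pow_mul hφ'c hr.le (n+1)) (by rw [uIcc_of_le hr.le]; exact left_mem_Icc.mpr hr.le)
        rwa [uIcc_of_le hr.le] at this
      have h2 : ContinuousOn (fun x => ∫ s in (0:ℝ)..x, s ^ n * φ s) (Icc 0 r) := by
        have := intervalIntegral.continuousOn_primitive_interval'
          (integrable_pow_mul hφc hr.le n) (by rw [uIcc_of_le hr.le]; exact left_mem_Icc.mpr hr.le)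
        rwa [uIcc_of_le hr.le] at this
      have hIcc : Icc (0:ℝ) r ⊆ Ici 0 := fun x hx => hx.1
      exact (h1.sub (((continuous_pow (n+1)).continuousOn).mul (hφc.mono hIcc))).add
        (continuousOn_const.mul h2)
    have hderiv : ∀ x ∈ Ico 0 r, HasDerivWithinAt C 0 (Ici x) x := by
      intro x hx
      have hx0 : (0:ℝ) ≤ x := hx.1
      have hsub : Ici x ⊆ Ici (0:ℝ) := Ici_subset_Ici.mpr hx0
      have hsub' : Ioi x ⊆ Ici (0:ℝ) := fun y hy => le_of_lt (lt_of_le_of_lt hx0 hy)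
      have hA : HasDerivWithinAt (fun y => ∫ s in (0:ℝ)..y, s ^ (n+1) * φ' s)
          (x ^ (n+1) * φ' x) (Ici x) x := by
        apply intervalIntegral.integral_hasDerivWithinAt_right
          (integrable_pow_mul hφ'c hx0 (n+1))
        · exact (((continuous_pow (n+1)).continuousOn).mul hφ'c).stronglyMeasurableAtFilter_nhdsWithin
            measurableSet_Ici x |>.filter_mono (nhdsWithin_mono x hsub')
        · exact ((((continuous_pow (n+1)).continuousOn).mul hφ'c) x (hsub self_mem_Ici)).mono hsub'
      have hB : HasDerivWithinAt (fun y => y ^ (n+1) * φ y)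
          ((n+1 : ℝ) * x ^ n * φ x + x ^ (n+1) * φ' x) (Ici x) x := by
        have hφd : HasDerivWithinAt φ (φ' x) (Ici x) x :=
          ((hφ.differentiableOn one_ne_zero x (hsub self_mem_Ici)).hasDerivWithinAt).mono hsub
        have hp : HasDerivWithinAt (fun y : ℝ => y ^ (n+1)) ((n+1 : ℝ) * x ^ n) (Ici x) x := by
          simpa using hasDerivWithinAt_pow (n+1) x (s := Ici x)
        simpa using hp.fun_mul hφd
      have hD : HasDerivWithinAt (fun y => ∫ s in (0:ℝ)..y, s ^ n * φ s)
          (x ^ n * φ x) (Ici x) x := by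
        apply intervalIntegral.integral_hasDerivWithinAt_right (integrable_pow_mul hφc hx0 n)
        · exact (((continuous_pow n).continuousOn).mul hφc).stronglyMeasurableAtFilter_nhdsWithin
            measurableSet_Ici x |>.filter_mono (nhdsWithin_mono x hsub')
        · exact ((((continuous_pow n).continuousOn).mul hφc) x (hsub self_mem_Ici)).mono hsub'
      have := (hA.sub hB).add (hD.const_mul ((n:ℝ)+1))
      refine this.congr_deriv ?_
      ring
    have := constant_of_has_deriv_right_zero hcont hderiv r (right_mem_Icc.mpr hr.le)
    simp only [hC] at this
    rw [intervalIntegral.integral_same, intervalIntegral.integral_same] at this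
    -- C r = C 0 = 0 - 0 + 0
    have h0 : (0:ℝ) ^ (n+1) * φ 0 = 0 := by simp
    rw [h0] at this
    linarith [this]
  rw [Gn_of_ne hr.ne', Gn_of_ne hr.ne', key]
  have hrp : (0:ℝ) < r ^ (n+1) := pow_pos hr _
  have hrp2 : (0:ℝ) < r ^ (n+2) := pow_pos hr _
  field_simp
  ring

lemma Gn_contDiffOn (k : ℕ) : ∀ (n : ℕ) (φ : ℝ → ℝ), ContDiffOn ℝ k φ (Ici 0) →
    ContDiffOn ℝ k (Gn n φ) (Ici 0) := by
  induction k with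
  | zero =>
    intro n φ hφ
    rw [show ((0:ℕ) : WithTop ℕ∞) = 0 from rfl, contDiffOn_zero] at hφ ⊢
    exact Gn_continuousOn hφ
  | succ k ih =>
    intro n φ hφ
    have hφc : ContinuousOn φ (Ici 0) := hφ.continuousOn
    have hφ1 : ContDiffOn ℝ 1 φ (Ici 0) := hφ.of_le (by exact_mod_cast Nat.one_le_iff_ne_zero.mpr (Nat.succ_ne_zero k))
    have hφ'k : ContDiffOn ℝ k (derivWithin φ (Ici 0)) (Ici 0) :=
      hφ.derivWithin (uniqueDiffOn_Ici 0) (by exact_mod_cast le_rfl)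
    have hG' := ih (n+1) (derivWithin φ (Ici 0)) hφ'k
    have hG'c : ContinuousOn (Gn (n+1) (derivWithin φ (Ici 0))) (Ici 0) :=
      Gn_continuousOn (hφ.continuousOn_derivWithin (uniqueDiffOn_Ici 0)
        (by exact_mod_cast Nat.one_le_iff_ne_zero.mpr (Nat.succ_ne_zero k)))
    have hderiv_eq : ∀ x ∈ Ioi (0:ℝ), deriv (Gn n φ) x = Gn (n+1) (derivWithin φ (Ici 0)) x := by
      intro x hx
      rw [(Gn_hasDerivAt hφc hx).deriv, Gn_parts hφ1 hx]
    have hder0 : HasDerivWithinAt (Gn n φ) (Gn (n+1) (derivWithin φ (Ici 0)) 0) (Ici 0) 0 := by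
      apply hasDerivWithinAt_Ici_of_tendsto_deriv (s := Ioi 0)
      · intro x hx
        exact ((Gn_hasDerivAt hφc hx).differentiableAt).differentiableWithinAt
      · exact (Gn_continuousOn hφc 0 self_mem_Ici).mono Ioi_subset_Ici_self
      · exact self_mem_nhdsWithin
      · apply Tendsto.congr' _ ((hG'c 0 self_mem_Ici).mono Ioi_subset_Ici_self)
        filter_upwards [self_mem_nhdsWithin] with x hx
        exact (hderiv_eq x hx).symm
    have hdiff : DifferentiableOn ℝ (Gn n φ) (Ici 0) := by
      intro x hx
      rcases eq_or_lt_of_le (mem_Ici.mp hx) with h0 | h0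
      · exact h0 ▸ hder0.differentiableWithinAt
      · exact ((Gn_hasDerivAt hφc h0).differentiableAt).differentiableWithinAt
    have hdW : ∀ x ∈ Ici (0:ℝ), derivWithin (Gn n φ) (Ici 0) x = Gn (n+1) (derivWithin φ (Ici 0)) x := by
      intro x hx
      rcases eq_or_lt_of_le (mem_Ici.mp hx) with h0 | h0
      · exact h0 ▸ hder0.derivWithin (uniqueDiffOn_Ici 0 0 self_mem_Ici)
      · rw [derivWithin_of_mem_nhds (Ici_mem_nhds h0)]
        exact hderiv_eq x h0
    have : ((k+1 : ℕ) : WithTop ℕ∞) = (k : WithTop ℕ∞) + 1 := by push_cast; ring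
    rw [this, contDiffOn_succ_iff_derivWithin (uniqueDiffOn_Ici 0)]
    exact ⟨hdiff, by simp, hG'.congr hdW⟩

lemma deriv_eq_derivWithin {g : ℝ → ℝ} {r : ℝ} (hr : 0 < r) :
    deriv g r = derivWithin g (Ici 0) r := (derivWithin_of_mem_nhds (Ici_mem_nhds hr)).symm

lemma deriv2_eq {g : ℝ → ℝ} {r : ℝ} (hr : 0 < r) :
    deriv (deriv g) r = derivWithin (derivWithin g (Ici 0)) (Ici 0) r := by
  have h1 : deriv g =ᶠ[nhds r] derivWithin g (Ici 0) := by
    filter_upwards [isOpen_Ioi.mem_nhds hr] with x hx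
    exact (derivWithin_of_mem_nhds (Ici_mem_nhds hx)).symm
  rw [h1.deriv_eq, ← derivWithin_of_mem_nhds (Ici_mem_nhds hr)]

lemma rlap_eqOn {N : ℕ} {g : ℝ → ℝ} (hg : ContDiffOn ℝ 2 g (Ici 0))
    (h0 : derivWithin g (Ici 0) 0 = 0) :
    EqOn (rlap N g)
      (fun r => derivWithin (derivWithin g (Ici 0)) (Ici 0) r
        + ((N:ℝ) - 1) * Gn 0 (derivWithin (derivWithin g (Ici 0)) (Ici 0)) r) (Ici 0) := by
  have hg'1 : ContDiffOn ℝ 1 (derivWithin g (Ici 0)) (Ici 0) :=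
    hg.derivWithin (uniqueDiffOn_Ici 0) (by exact_mod_cast le_rfl)
  have hφc : ContinuousOn (derivWithin (derivWithin g (Ici 0)) (Ici 0)) (Ici 0) :=
    hg'1.continuousOn_derivWithin (uniqueDiffOn_Ici 0) le_rfl
  have hFTC : ∀ r : ℝ, 0 < r →
      (∫ s in (0:ℝ)..r, s ^ 0 * derivWithin (derivWithin g (Ici 0)) (Ici 0) s)
        = derivWithin g (Ici 0) r := by
    intro r hr
    have : (∫ s in (0:ℝ)..r, s ^ 0 * derivWithin (derivWithin g (Ici 0)) (Ici 0) s)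
        = ∫ s in (0:ℝ)..r, derivWithin (derivWithin g (Ici 0)) (Ici 0) s := by
      apply intervalIntegral.integral_congr
      intro x _; simp
    rw [this]
    have := intervalIntegral.integral_eq_sub_of_hasDeriv_right_of_le hr.le
      (hg'1.continuousOn.mono (fun x hx => hx.1 : Icc (0:ℝ) r ⊆ Ici 0))
      (fun x hx => ((hg'1.differentiableOn one_ne_zero x hx.1.le).hasDerivWithinAt).mono
        (fun y hy => le_of_lt (lt_of_le_of_lt hx.1.le hy) : Ioi x ⊆ Ici 0))
      ((hφc.mono (by rw [uIcc_of_le hr.le]; exact fun x hx => hx.1 : uIcc (0:ℝ) r ⊆ Ici 0)).intervalIntegrable)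
    rw [this, h0, sub_zero]
  have hpos : ∀ r ∈ Ioi (0:ℝ), rlap N g r
      = derivWithin (derivWithin g (Ici 0)) (Ici 0) r
        + ((N:ℝ) - 1) * Gn 0 (derivWithin (derivWithin g (Ici 0)) (Ici 0)) r := by
    intro r hr
    rw [rlap, if_neg (ne_of_gt hr), deriv2_eq hr]
    congr 1
    rw [Gn_of_ne (ne_of_gt hr), hFTC r hr, deriv_eq_derivWithin hr]
    rw [pow_one]
    ring
  intro r hr
  rcases eq_or_lt_of_le (mem_Ici.mp hr) with h0r | h0r
  · subst h0r
    have htd : Tendsto (fun s => deriv (deriv g) s + ((N : ℝ) - 1) / s * deriv g s)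
        (nhdsWithin 0 (Ioi 0))
        (nhds (derivWithin (derivWithin g (Ici 0)) (Ici 0) 0
          + ((N:ℝ) - 1) * Gn 0 (derivWithin (derivWithin g (Ici 0)) (Ici 0)) 0)) := by
      have hcontR : ContinuousWithinAt
          (fun r => derivWithin (derivWithin g (Ici 0)) (Ici 0) r
            + ((N:ℝ) - 1) * Gn 0 (derivWithin (derivWithin g (Ici 0)) (Ici 0)) r) (Ici 0) 0 :=
        ((hφc 0 self_mem_Ici).add ((continuousWithinAt_const).mul
          (Gn_continuousOn hφc 0 self_mem_Ici)))
      apply Tendsto.congr' _ (hcontR.mono Ioi_subset_Ici_self)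
      filter_upwards [self_mem_nhdsWithin] with x hx
      have := hpos x hx
      rw [rlap, if_neg (ne_of_gt hx)] at this
      exact this.symm
    show rlap N g 0 = _
    rw [rlap]
    simp only [if_pos rfl]
    exact htd.limUnder_eq
  · exact hpos r h0r

lemma rlap_contDiffOn {N : ℕ} {k : ℕ} {g : ℝ → ℝ} (hg : ContDiffOn ℝ (k+2 : ℕ) g (Ici 0))
    (h0 : derivWithin g (Ici 0) 0 = 0) : ContDiffOn ℝ k (rlap N g) (Ici 0) := by
  have hg2 : ContDiffOn ℝ 2 g (Ici 0) := hg.of_le (by exact_mod_cast Nat.le_add_left 2 k)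
  have hφk : ContDiffOn ℝ k (derivWithin (derivWithin g (Ici 0)) (Ici 0)) (Ici 0) := by
    refine ContDiffOn.derivWithin ?_ (uniqueDiffOn_Ici 0) (by exact_mod_cast le_rfl)
    exact hg.derivWithin (uniqueDiffOn_Ici 0) (by exact_mod_cast le_rfl)
  exact (hφk.add (contDiffOn_const.mul (Gn_contDiffOn k 0 _ hφk))).congr
    (fun x hx => (rlap_eqOn hg2 h0 hx))

lemma hasDerivAt_deriv {g : ℝ → ℝ} (hg : ContDiffOn ℝ 2 g (Ici 0)) {r : ℝ} (hr : 0 < r) :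
    HasDerivAt (deriv g) (deriv (deriv g) r) r := by
  have h2 : ContDiffOn ℝ 2 g (Ioi 0) := hg.mono Ioi_subset_Ici_self
  have h1 : ContDiffOn ℝ 1 (deriv g) (Ioi 0) :=
    h2.deriv_of_isOpen isOpen_Ioi (by norm_num)
  exact ((h1.differentiableOn (by norm_num)).differentiableAt
    (isOpen_Ioi.mem_nhds hr)).hasDerivAt

lemma hasDerivAt_H {N : ℕ} (hN : 2 ≤ N) {g : ℝ → ℝ} (hg : ContDiffOn ℝ 2 g (Ici 0))
    {r : ℝ} (hr : 0 < r) :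
    HasDerivAt (fun x => x ^ (N-1) * deriv g x) (r ^ (N-1) * rlap N g r) r := by
  have h1 := hasDerivAt_deriv hg hr
  have hp : HasDerivAt (fun x : ℝ => x ^ (N-1)) (((N-1 : ℕ) : ℝ) * r ^ (N-2)) r := by
    have := hasDerivAt_pow (N-1) r
    rw [show N - 2 = N - 1 - 1 from by omega]; exact this
  have := hp.mul h1
  refine this.congr_deriv ?_
  rw [rlap, if_neg hr.ne']
  have hcast : ((N - 1 : ℕ) : ℝ) = (N : ℝ) - 1 := by
    push_cast [Nat.cast_sub (by omega : 1 ≤ N)]; ring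
  have hpow : r ^ (N-1) = r ^ (N-2) * r := by
    rw [← pow_succ]; congr 1; omega
  rw [hcast, hpow]
  field_simp
  ring

lemma tendsto_H_zero {N : ℕ} {g : ℝ → ℝ} (hg : ContDiffOn ℝ 2 g (Ici 0))
    (h0 : derivWithin g (Ici 0) 0 = 0) (hN : 2 ≤ N) :
    Tendsto (fun x => x ^ (N-1) * deriv g x) (nhdsWithin 0 (Ioi 0)) (nhds 0) := by
  have hdg : Tendsto (deriv g) (nhdsWithin 0 (Ioi 0)) (nhds 0) := by
    have hc : ContinuousWithinAt (derivWithin g (Ici 0)) (Ici 0) 0 :=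
      (hg.continuousOn_derivWithin (uniqueDiffOn_Ici 0) (by norm_num)) 0 self_mem_Ici
    have := hc.mono Ioi_subset_Ici_self
    rw [ContinuousWithinAt, h0] at this
    apply Tendsto.congr' _ this
    filter_upwards [self_mem_nhdsWithin] with x hx
    exact (deriv_eq_derivWithin hx).symm
  have hpow : Tendsto (fun x : ℝ => x ^ (N-1)) (nhdsWithin 0 (Ioi 0)) (nhds 0) := by
    have : Tendsto (fun x : ℝ => x ^ (N-1)) (nhds 0) (nhds ((0:ℝ) ^ (N-1))) :=
      (continuous_pow (N-1)).tendsto 0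
    rw [zero_pow (by omega : N - 1 ≠ 0)] at this
    exact this.mono_left nhdsWithin_le_nhds
  simpa using hpow.mul hdg

lemma deriv_neg_of_rlap_neg {N : ℕ} (hN : 2 ≤ N) {g : ℝ → ℝ} (hg : ContDiffOn ℝ 2 g (Ici 0))
    (h0 : derivWithin g (Ici 0) 0 = 0)
    (hlap : ∀ r, 0 < r → rlap N g r < 0) : ∀ r, 0 < r → deriv g r < 0 := by
  set H : ℝ → ℝ := fun x => x ^ (N-1) * deriv g x with hH
  have hHanti : StrictAntiOn H (Ioi 0) := by
    apply strictAntiOn_of_deriv_neg (convex_Ioi 0)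
    · exact fun x hx => ((hasDerivAt_H hN hg hx).continuousAt.continuousWithinAt)
    · intro x hx
      rw [interior_Ioi] at hx
      rw [(hasDerivAt_H hN hg hx).deriv]
      exact mul_neg_of_pos_of_neg (pow_pos hx _) (hlap x hx)
  have hH0 : Tendsto H (nhdsWithin 0 (Ioi 0)) (nhds 0) := tendsto_H_zero hg h0 (by omega)
  have hHneg : ∀ r, 0 < r → H r < 0 := by
    intro r hr
    have h2 : H (r/2) ≤ 0 := by
      apply ge_of_tendsto hH0
      filter_upwards [Ioo_mem_nhdsGT_of_mem (⟨le_rfl, half_pos hr⟩ : (0:ℝ) ∈ Ico 0 (r/2))]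
        with x hx
      exact (hHanti hx.1 (half_pos hr) hx.2).le
    calc H r < H (r/2) := hHanti (half_pos hr) hr (half_lt_self hr)
      _ ≤ 0 := h2
  intro r hr
  by_contra h
  push_neg at h
  have : 0 ≤ H r := mul_nonneg (pow_pos hr _).le h
  exact absurd (hHneg r hr) (not_lt.mpr this)

lemma rlap_neg_eq {N : ℕ} {g : ℝ → ℝ} {r : ℝ} (hr : r ≠ 0) :
    rlap N (fun x => -g x) r = - rlap N g r := by
  have h1 : (deriv fun x => -g x) = fun x => -deriv g x := funext fun x => deriv.neg
  rw [rlap, rlap, if_neg hr, if_neg hr, h1]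
  have h2 : (deriv fun x => -deriv g x) r = -deriv (deriv g) r := deriv.neg
  rw [h2]
  ring

lemma deriv_pos_of_rlap_pos {N : ℕ} (hN : 2 ≤ N) {g : ℝ → ℝ} (hg : ContDiffOn ℝ 2 g (Ici 0))
    (h0 : derivWithin g (Ici 0) 0 = 0)
    (hlap : ∀ r, 0 < r → 0 < rlap N g r) : ∀ r, 0 < r → 0 < deriv g r := by
  have hneg := deriv_neg_of_rlap_neg hN hg.neg ?_ ?_
  · intro r hr
    have := hneg r hr
    rw [deriv.fun_neg] at this
    linarith
  · have : derivWithin (fun x => -g x) (Ici 0) 0 = -derivWithin g (Ici 0) 0 :=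
      derivWithin.fun_neg
    rw [this, h0, neg_zero]
  · intro r hr
    rw [rlap_neg_eq hr.ne']
    linarith [hlap r hr]

lemma tendsto_atTop_of_rlap_ge {N : ℕ} (hN : 2 ≤ N) {g : ℝ → ℝ} (hg : ContDiffOn ℝ 2 g (Ici 0))
    {a r₀ : ℝ} (ha : 0 < a) (hr₀ : 0 < r₀)
    (hlap : ∀ r, r₀ ≤ r → a ≤ rlap N g r) : Tendsto g atTop atTop := by
  have hNR : (0:ℝ) < N := by positivity
  set H : ℝ → ℝ := fun x => x ^ (N-1) * deriv g x with hH
  set C : ℝ := H r₀ - (a / N) * r₀ ^ N with hC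
  -- comparison : H x ≥ (a/N) x^N + C on [r₀, ∞)
  have key : ∀ x, r₀ ≤ x → (a / N) * x ^ N + C ≤ H x := by
    intro x hx
    have hmono : MonotoneOn (fun y => H y - (a / N) * y ^ N) (Ici r₀) := by
      have hder : ∀ y, r₀ ≤ y → HasDerivAt (fun y => H y - (a / N) * y ^ N)
          (y ^ (N-1) * rlap N g y - (a/N) * ((N:ℝ) * y ^ (N-1))) y := by
        intro y hy
        exact (hasDerivAt_H hN hg (lt_of_lt_of_le hr₀ hy)).sub
          (((hasDerivAt_pow N y).const_mul (a/N)).congr_deriv (by push_cast; ring))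
      apply monotoneOn_of_deriv_nonneg (convex_Ici r₀)
      · exact fun y hy => ((hder y hy).continuousAt.continuousWithinAt)
      · intro y hy
        rw [interior_Ici] at hy
        exact ((hder y hy.le).differentiableAt).differentiableWithinAt
      · intro y hy
        rw [interior_Ici] at hy
        rw [(hder y hy.le).deriv]
        have h1 : a ≤ rlap N g y := hlap y hy.le
        have h2 : (0:ℝ) < y ^ (N-1) := pow_pos (lt_of_lt_of_le hr₀ hy.le) _
        have h3 : (a/N) * ((N:ℝ) * y ^ (N-1)) = a * y ^ (N-1) := by field_simp
        rw [h3]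
        nlinarith
    have h := hmono self_mem_Ici (mem_Ici.mpr hx) hx
    simp only at h
    rw [hC]
    linarith
  -- eventually deriv g ≥ 1
  have hev : ∀ᶠ x in atTop, 1 ≤ deriv g x := by
    have ht1 : Tendsto (fun x : ℝ => (a/N) * x + C / x ^ (N-1)) atTop atTop := by
      have hA : Tendsto (fun x : ℝ => (a/N) * x) atTop atTop :=
        Tendsto.const_mul_atTop (by positivity) tendsto_id
      have hB : Tendsto (fun x : ℝ => C / x ^ (N-1)) atTop (nhds 0) :=
        Tendsto.div_atTop tendsto_const_nhds (tendsto_pow_atTop (by omega))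
      exact hA.atTop_add hB
    filter_upwards [ht1.eventually_ge_atTop 1, eventually_ge_atTop (max r₀ 1)] with x h1 h2
    have hxr : r₀ ≤ x := le_trans (le_max_left _ _) h2
    have hx1 : (1:ℝ) ≤ x := le_trans (le_max_right _ _) h2
    have hx0 : (0:ℝ) < x := lt_of_lt_of_le one_pos hx1
    have hxp : (0:ℝ) < x ^ (N-1) := pow_pos hx0 _
    have hxN : x ^ N = x ^ (N-1) * x := by
      rw [← pow_succ]; congr 1; omega
    have hkey := key x hxr
    rw [hxN] at hkey
    have : (a/N) * x + C / x ^ (N-1) ≤ deriv g x := by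
      by_contra hcon
      push_neg at hcon
      have hmul := mul_lt_mul_of_pos_left hcon hxp
      have heq : x ^ (N-1) * ((a/N) * x + C / x ^ (N-1)) = (a/N) * (x ^ (N-1) * x) + C := by
        field_simp
      rw [heq] at hmul
      have hHx : H x = x ^ (N-1) * deriv g x := rfl
      linarith
    linarith
  -- linear growth
  obtain ⟨R, hR⟩ := eventually_atTop.mp (hev.and (eventually_ge_atTop (max r₀ 1)))
  have hlin : ∀ x, R ≤ x → g R + (x - R) ≤ g x := by
    intro x hx
    have hmono : MonotoneOn (fun y => g y - y) (Ici R) := by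
      have hder : ∀ y, R ≤ y → HasDerivAt (fun y => g y - y) (deriv g y - 1) y := by
        intro y hy
        have hy0 : (0:ℝ) < y :=
          lt_of_lt_of_le one_pos (le_trans (le_trans (le_max_right r₀ 1) (hR R le_rfl).2) hy)
        have hgd : HasDerivAt g (deriv g y) y :=
          ((hg.differentiableOn (by norm_num)).differentiableAt (Ici_mem_nhds hy0)).hasDerivAt
        exact hgd.sub (hasDerivAt_id y)
      apply monotoneOn_of_deriv_nonneg (convex_Ici R)
      · exact fun y hy => ((hder y hy).continuousAt.continuousWithinAt)
      · intro y hy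
        rw [interior_Ici] at hy
        exact ((hder y hy.le).differentiableAt).differentiableWithinAt
      · intro y hy
        rw [interior_Ici] at hy
        rw [(hder y hy.le).deriv]
        have := (hR y hy.le).1
        linarith
    have := hmono self_mem_Ici (mem_Ici.mpr hx) hx
    simp only at this
    linarith
  apply tendsto_atTop_mono' _ _ (tendsto_atTop_add_const_left _ (g R - R) tendsto_id)
  filter_upwards [eventually_ge_atTop R] with x hx
  have := hlin x hx
  simp only [id]
  linarith


end RlapAux

/-- Let `m ≥ 3`, `N ≥ 3` and `u ∈ C^{2m}([0,∞))` solve `Δ_N^m u = -e^u` on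
`(0,∞)` with `(Δ_N^i u)'(0) = 0` for all `0 ≤ i ≤ m-1` and `(Δ_N^{m-2} u)(0) = 0`. Then
`lim_{r→∞} (Δ_N^{m-1} u)(r)` exists in `[-∞,0)`, i.e. it is strictly negative
(possibly `-∞`). -/
theorem limit_penultimate_laplacian_neg
    (m N : ℕ) (hm : 3 ≤ m) (hN : 3 ≤ N) (u : ℝ → ℝ)
    (hu : ContDiffOn ℝ (2*m : ℕ) u (Set.Ici 0))
    (heq : ∀ r : ℝ, 0 < r → (rlap N)^[m] u r = -Real.exp (u r))
    (hder : ∀ i < m, derivWithin ((rlap N)^[i] u) (Set.Ici 0) 0 = 0)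
    (hval : (rlap N)^[m-2] u 0 = 0) :
    ∃ L : EReal, Tendsto (fun r => (((rlap N)^[m-1] u r : ℝ) : EReal)) atTop (nhds L) ∧
      L < 0 := by
  have hN2 : 2 ≤ N := by omega
  set w : ℕ → ℝ → ℝ := fun i => (rlap N)^[i] u with hw
  have reg : ∀ i, i ≤ m → ContDiffOn ℝ ((2*m - 2*i : ℕ) : ℕ∞) (w i) (Ici 0) := by
    intro i
    induction i with
    | zero =>
      intro _
      simpa [hw] using hu
    | succ i ih =>
      intro hi1
      have hprev := ih (by omega)
      have hcast : (2*m - 2*i : ℕ) = (2*m - 2*(i+1)) + 2 := by omega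
      rw [hcast] at hprev
      have hstep : w (i+1) = rlap N (w i) := Function.iterate_succ_apply' (rlap N) i u
      rw [hstep]
      exact rlap_contDiffOn hprev (hder i (by omega))
  have hW2 : ContDiffOn ℝ 2 (w (m-1)) (Ici 0) := by
    have h := reg (m-1) (by omega)
    rw [show (2*m - 2*(m-1) : ℕ) = 2 from by omega] at h
    exact_mod_cast h
  have hV2 : ContDiffOn ℝ 2 (w (m-2)) (Ici 0) := by
    have h := reg (m-2) (by omega)
    rw [show (2*m - 2*(m-2) : ℕ) = 4 from by omega] at h
    exact h.of_le (by norm_num)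
  have hWeq : ∀ r, 0 < r → rlap N (w (m-1)) r = -Real.exp (u r) := by
    intro r hr
    have h1 : w ((m-1)+1) = rlap N (w (m-1)) := Function.iterate_succ_apply' (rlap N) (m-1) u
    rw [← h1, show m-1+1 = m from by omega]
    exact heq r hr
  have hVeq : rlap N (w (m-2)) = w (m-1) := by
    have h1 : w ((m-2)+1) = rlap N (w (m-2)) := Function.iterate_succ_apply' (rlap N) (m-2) u
    rw [← h1, show m-2+1 = m-1 from by omega]
  have hWder : ∀ r, 0 < r → deriv (w (m-1)) r < 0 :=
    deriv_neg_of_rlap_neg hN2 hW2 (hder (m-1) (by omega))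
      (fun r hr => by rw [hWeq r hr]; exact neg_lt_zero.mpr (Real.exp_pos _))
  have hWanti : StrictAntiOn (w (m-1)) (Ioi 0) :=
    strictAntiOn_of_deriv_neg (convex_Ioi 0) (hW2.continuousOn.mono Ioi_subset_Ici_self)
      (by rw [interior_Ioi]; exact fun x hx => hWder x hx)
  set f : ℝ → EReal := fun r => ((w (m-1) (max r 1) : ℝ) : EReal) with hf
  have hfanti : Antitone f := by
    intro s t hst
    have h1 : (0:ℝ) < max s 1 := lt_of_lt_of_le one_pos (le_max_right _ _)
    have h2 : (0:ℝ) < max t 1 := lt_of_lt_of_le one_pos (le_max_right _ _)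
    have hle : max s 1 ≤ max t 1 := max_le_max hst le_rfl
    have hws : w (m-1) (max t 1) ≤ w (m-1) (max s 1) := by
      rcases eq_or_lt_of_le hle with h | h
      · rw [h]
      · exact (hWanti h1 h2 h).le
    simp only [hf]
    exact_mod_cast hws
  refine ⟨⨅ r, f r, ?_, ?_⟩
  · apply (tendsto_atTop_iInf hfanti).congr'
    filter_upwards [eventually_ge_atTop (1:ℝ)] with r hr
    rw [hf]
    simp only [max_eq_left hr]
    rfl
  · by_contra hL
    push_neg at hL
    have hWpos : ∀ r, 0 < r → 0 < w (m-1) r := by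
      intro r hr
      have h1 : (w (m-1) (r+1) : EReal) = f (r+1) := by
        rw [hf]; simp only [max_eq_left (by linarith : (1:ℝ) ≤ r+1)]
      have h2 : (0:EReal) ≤ f (r+1) := le_trans hL (iInf_le f (r+1))
      have h3 : (0:ℝ) ≤ w (m-1) (r+1) := by
        rw [← h1] at h2
        exact_mod_cast h2
      have h4 : w (m-1) (r+1) < w (m-1) r :=
        hWanti (mem_Ioi.mpr hr) (mem_Ioi.mpr (by linarith)) (by linarith)
      linarith
    have hVder : ∀ r, 0 < r → 0 < deriv (w (m-2)) r :=
      deriv_pos_of_rlap_pos hN2 hV2 (hder (m-2) (by omega))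
        (fun r hr => by rw [hVeq]; exact hWpos r hr)
    have hVmono : StrictMonoOn (w (m-2)) (Ioi 0) :=
      strictMonoOn_of_deriv_pos (convex_Ioi 0) (hV2.continuousOn.mono Ioi_subset_Ici_self)
        (by rw [interior_Ioi]; exact fun x hx => hVder x hx)
    have hV0 : Tendsto (w (m-2)) (nhdsWithin 0 (Ioi 0)) (nhds 0) := by
      have h := (hV2.continuousOn 0 self_mem_Ici).mono Ioi_subset_Ici_self
      rw [ContinuousWithinAt] at h
      rw [show w (m-2) 0 = 0 from hval] at h
      exact h
    have hVpos : ∀ r, 0 < r → 0 < w (m-2) r := by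
      intro r hr
      have h2 : w (m-2) (r/2) < w (m-2) r := hVmono (half_pos hr) hr (half_lt_self hr)
      have h0 : 0 ≤ w (m-2) (r/2) := by
        apply le_of_tendsto hV0
        filter_upwards [Ioo_mem_nhdsGT_of_mem (⟨le_rfl, half_pos hr⟩ : (0:ℝ) ∈ Ico 0 (r/2))]
          with x hx
        exact (hVmono hx.1 (half_pos hr) hx.2).le
      linarith
    have chain : ∀ k, k ≤ m - 2 → ∃ c, 0 < c ∧ ∃ R, 1 ≤ R ∧ ∀ r, R ≤ r → c ≤ w (m-2-k) r := by
      intro k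
      induction k with
      | zero =>
        intro _
        refine ⟨w (m-2) 1, hVpos 1 one_pos, 1, le_rfl, fun r hr => ?_⟩
        simp only [Nat.sub_zero]
        rcases eq_or_lt_of_le hr with h | h
        · rw [← h]
        · exact (hVmono (mem_Ioi.mpr one_pos) (mem_Ioi.mpr (by linarith)) h).le
      | succ k ih =>
        intro hk
        obtain ⟨c, hc, R, hR, hbound⟩ := ih (by omega)
        have hj1 : 1 ≤ m - 2 - k := by omega
        have hjsub : m - 2 - (k+1) = (m - 2 - k) - 1 := by omega
        have hiter : rlap N (w ((m-2-k) - 1)) = w (m-2-k) := by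
          have h1 : w (((m-2-k)-1)+1) = rlap N (w ((m-2-k)-1)) :=
            Function.iterate_succ_apply' (rlap N) ((m-2-k)-1) u
          rw [← h1, show (m-2-k)-1+1 = m-2-k from by omega]
        have hreg : ContDiffOn ℝ 2 (w ((m-2-k)-1)) (Ici 0) := by
          have h := reg ((m-2-k)-1) (by omega)
          refine h.of_le ?_
          have h2 : (2:ℕ) ≤ 2*m - 2*((m-2-k)-1) := by omega
          calc ((2:ℕ∞) : WithTop ℕ∞) ≤ (((2*m - 2*((m-2-k)-1) : ℕ) : ℕ∞) : WithTop ℕ∞) := by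
                exact_mod_cast h2
            _ = _ := rfl
        have hgrow : Tendsto (w ((m-2-k)-1)) atTop atTop :=
          tendsto_atTop_of_rlap_ge hN2 hreg hc (lt_of_lt_of_le one_pos hR)
            (fun r hr => by rw [hiter]; exact hbound r hr)
        obtain ⟨R', hR'⟩ := eventually_atTop.mp (hgrow.eventually_ge_atTop 1)
        exact ⟨1, one_pos, max R' 1, le_max_right _ _, fun r hr =>
          hjsub ▸ hR' r (le_trans (le_max_left _ _) hr)⟩
    obtain ⟨c, hc, R, hR, hbound⟩ := chain (m-2) le_rfl
    rw [show m - 2 - (m-2) = 0 from by omega] at hbound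
    have hnegW : Tendsto (fun x => - w (m-1) x) atTop atTop := by
      apply tendsto_atTop_of_rlap_ge hN2 hW2.neg (Real.exp_pos c) (lt_of_lt_of_le one_pos hR)
      intro r hr
      have hr0 : 0 < r := lt_of_lt_of_le (lt_of_lt_of_le one_pos hR) hr
      rw [rlap_neg_eq hr0.ne', hWeq r hr0, neg_neg]
      exact Real.exp_le_exp.mpr (hbound r hr)
    obtain ⟨r, hr1, hr2⟩ := ((hnegW.eventually_ge_atTop 1).and (eventually_ge_atTop (1:ℝ))).exists
    have := hWpos r (lt_of_lt_of_le one_pos hr2)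
    linarith
end

section
/- Let m ≥ 3 and N ≥ 3 be integers and let (a_0,…,a_{m−1}) ∈ ℝ^m with a_{m−2} = 0. Let u ∈ C^{2m}([0,∞)) be the radial solution of Δ_N^m u = −e^u on (0,∞) with (Δ_N^i u)'(0) = 0 and (Δ_N^i u)(0) = a_i for all 0 ≤ i ≤ m−1. Then V(a_0,…,a_{m−1}) := ω_{N−1} ∫_0^∞ e^{u(r)} r^{N−1} dr < ∞; moreover there exist constants M₀ > 0 and R₀ > 0 such that u(r) ≤ −M₀·r^{2m−4} for all r ≥ R₀. -/
open MeasureTheory Filter Set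
open scoped ENNReal Topology

set_option maxHeartbeats 1600000

namespace RadialAux

noncomputable def W (v : ℝ → ℝ) (j : ℕ) : ℝ → ℝ := iteratedDerivWithin j v (Set.Ici 0)

noncomputable def gInt (v : ℝ → ℝ) (j : ℕ) : ℝ → ℝ :=
  fun r => ∫ t in (0:ℝ)..1, t^j * W v (j+2) (r*t)

variable {v : ℝ → ℝ} {p : ℕ} {j : ℕ}

lemma Wcont (hv : ContDiffOn ℝ p v (Set.Ici 0)) (hj : j ≤ p) :
    ContinuousOn (W v j) (Set.Ici 0) :=
  hv.continuousOn_iteratedDerivWithin (by exact_mod_cast hj) (uniqueDiffOn_Ici 0)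

lemma Wderiv (hv : ContDiffOn ℝ p v (Set.Ici 0)) (hj : j < p) {r : ℝ} (hr : 0 < r) :
    HasDerivAt (W v j) (W v (j+1) r) r := by
  have hdiff : DifferentiableOn ℝ (W v j) (Set.Ici 0) :=
    hv.differentiableOn_iteratedDerivWithin (by exact_mod_cast hj) (uniqueDiffOn_Ici 0)
  have hmem : Set.Ici (0:ℝ) ∈ 𝓝 r := Ici_mem_nhds hr
  have hda : DifferentiableAt ℝ (W v j) r := (hdiff r (le_of_lt hr)).differentiableAt hmem
  have hval : W v (j+1) r = deriv (W v j) r := by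
    rw [W, iteratedDerivWithin_succ]
    exact derivWithin_of_mem_nhds hmem
  rw [hval]; exact hda.hasDerivAt

lemma gInt_integrable (hv : ContDiffOn ℝ p v (Set.Ici 0)) (hj : j + 2 ≤ p)
    {y : ℝ} (hy : 0 ≤ y) :
    IntervalIntegrable (fun t => t^j * W v (j+2) (y*t)) volume 0 1 := by
  apply ContinuousOn.intervalIntegrable
  rw [Set.uIcc_of_le (by norm_num : (0:ℝ) ≤ 1)]
  refine (continuousOn_pow j).mul ?_
  exact (Wcont hv hj).comp ((continuous_const.mul continuous_id).continuousOn)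
    (fun t ht => mul_nonneg hy ht.1)

lemma gInt_cont (hv : ContDiffOn ℝ p v (Set.Ici 0)) (hj : j + 2 ≤ p) :
    ContinuousOn (gInt v j) (Set.Ici 0) := by
  have hWc : ContinuousOn (W v (j+2)) (Set.Ici 0) := Wcont hv hj
  intro r₀ hr₀
  have huc : UniformContinuousOn (W v (j+2)) (Set.Icc 0 (r₀+1)) :=
    isCompact_Icc.uniformContinuousOn_of_continuous
      (hWc.mono (Icc_subset_Ici_self))
  rw [Metric.continuousWithinAt_iff]
  intro ε hε
  rw [Metric.uniformContinuousOn_iff] at huc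
  obtain ⟨δ₁, hδ₁, hδ⟩ := huc (ε/2) (by positivity)
  refine ⟨min δ₁ 1, by positivity, ?_⟩
  intro x hx hxd
  have hx0 : (0:ℝ) ≤ x := hx
  have hr₀0 : (0:ℝ) ≤ r₀ := hr₀
  have hxr : |x - r₀| < min δ₁ 1 := by rwa [Real.dist_eq] at hxd
  have hx1 : x ≤ r₀ + 1 := by
    have h1 := abs_sub_lt_iff.mp (lt_of_lt_of_le hxr (min_le_right _ _))
    linarith [h1.1]
  have hsub : gInt v j x - gInt v j r₀
      = ∫ t in (0:ℝ)..1, (t^j * W v (j+2) (x*t) - t^j * W v (j+2) (r₀*t)) :=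
    (intervalIntegral.integral_sub (gInt_integrable hv hj hx0)
      (gInt_integrable hv hj hr₀0)).symm
  have hb : ∀ t ∈ Set.uIoc (0:ℝ) 1,
      ‖t^j * W v (j+2) (x*t) - t^j * W v (j+2) (r₀*t)‖ ≤ ε/2 := by
    intro t ht
    rw [Set.uIoc_of_le (by norm_num : (0:ℝ) ≤ 1)] at ht
    have ht0 : 0 < t := ht.1
    have ht1 : t ≤ 1 := ht.2
    have hmem1 : x*t ∈ Set.Icc 0 (r₀+1) := ⟨mul_nonneg hx0 ht0.le, by nlinarith⟩
    have hmem2 : r₀*t ∈ Set.Icc 0 (r₀+1) := ⟨mul_nonneg hr₀0 ht0.le, by nlinarith⟩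
    have hdist : dist (x*t) (r₀*t) < δ₁ := by
      rw [Real.dist_eq]
      have he : |x*t - r₀*t| = |x - r₀| * t := by
        rw [← sub_mul, abs_mul, abs_of_nonneg ht0.le]
      rw [he]
      have h2 : |x - r₀| * t ≤ |x - r₀| := by nlinarith [abs_nonneg (x - r₀)]
      exact lt_of_le_of_lt h2 (lt_of_lt_of_le hxr (min_le_left _ _))
    have hWd := hδ _ hmem1 _ hmem2 hdist
    rw [Real.dist_eq] at hWd
    rw [← mul_sub, Real.norm_eq_abs, abs_mul]
    have htj : |t^j| ≤ 1 := by
      rw [abs_pow]; exact pow_le_one₀ (abs_nonneg t) (by rw [abs_of_nonneg ht0.le]; exact ht1)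
    nlinarith [abs_nonneg (W v (j+2) (x*t) - W v (j+2) (r₀*t)), abs_nonneg (t^j)]
  rw [Real.dist_eq]
  calc |gInt v j x - gInt v j r₀|
      = ‖∫ t in (0:ℝ)..1, (t^j * W v (j+2) (x*t) - t^j * W v (j+2) (r₀*t))‖ := by
        rw [← hsub]; rfl
    _ ≤ (ε/2) * |1 - 0| := intervalIntegral.norm_integral_le_of_norm_le_const hb
    _ < ε := by rw [show |(1:ℝ) - 0| = 1 by norm_num]; linarith


lemma gInt_deriv (hv : ContDiffOn ℝ p v (Set.Ici 0)) (hj : j + 3 ≤ p) {r : ℝ} (hr : 0 < r) :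
    HasDerivAt (gInt v j) (gInt v (j+1) r) r := by
  have hWc2 : ContinuousOn (W v (j+2)) (Set.Ici 0) := Wcont hv (by omega)
  have hWc3 : ContinuousOn (W v (j+3)) (Set.Ici 0) := Wcont hv (by omega)
  obtain ⟨B, hB⟩ : ∃ B, ∀ y ∈ Set.Icc (0:ℝ) (2*r), ‖W v (j+3) y‖ ≤ B :=
    isCompact_Icc.exists_bound_of_continuousOn (hWc3.mono (fun y hy => hy.1))
  have hball : ∀ x ∈ Metric.ball r (r/2), 0 < x ∧ x ≤ 2*r := by
    intro x hx
    rw [Metric.mem_ball, Real.dist_eq] at hx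
    have := abs_sub_lt_iff.mp hx
    constructor <;> linarith [this.1, this.2]
  have hmain := intervalIntegral.hasDerivAt_integral_of_dominated_loc_of_deriv_le
    (μ := volume) (F := fun x t => t^j * W v (j+2) (x*t))
    (F' := fun x t => t^(j+1) * W v (j+3) (x*t)) (x₀ := r) (a := (0:ℝ)) (b := 1)
    (bound := fun _ => |B|) (Metric.ball_mem_nhds r (half_pos hr))
    ?_ ?_ ?_ ?_ ?_ ?_
  · exact hmain.2
  · -- measurability eventually
    filter_upwards [Metric.ball_mem_nhds r (half_pos hr)] with x hx
    have hx0 : (0:ℝ) ≤ x := (hball x hx).1.le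
    refine ContinuousOn.aestronglyMeasurable ?_ measurableSet_uIoc
    refine ((continuousOn_pow j).mul ((Wcont hv (by omega)).comp
      ((continuous_const.mul continuous_id).continuousOn) (fun t ht => ?_))).mono
      (by rw [Set.uIoc_of_le (by norm_num : (0:ℝ) ≤ 1)])
    exact mul_nonneg hx0 ht.1.le
  · exact gInt_integrable hv (by omega) hr.le
  · refine ContinuousOn.aestronglyMeasurable ?_ measurableSet_uIoc
    refine ((continuousOn_pow (j+1)).mul ((Wcont hv (by omega)).comp
      ((continuous_const.mul continuous_id).continuousOn) (fun t ht => ?_))).mono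
      (by rw [Set.uIoc_of_le (by norm_num : (0:ℝ) ≤ 1)])
    exact mul_nonneg hr.le ht.1.le
  · -- bound
    refine Filter.Eventually.of_forall (fun t => fun ht x hx => ?_)
    rw [Set.uIoc_of_le (by norm_num : (0:ℝ) ≤ 1)] at ht
    have hx0 : 0 < x := (hball x hx).1
    have hxt : x*t ∈ Set.Icc (0:ℝ) (2*r) := by
      constructor
      · exact mul_nonneg hx0.le ht.1.le
      · calc x * t ≤ x * 1 := by nlinarith [ht.2, ht.1]
          _ ≤ 2*r := by linarith [(hball x hx).2]
    have h1 := hB _ hxt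
    rw [Real.norm_eq_abs, abs_mul]
    have htj : |t^(j+1)| ≤ 1 := by
      rw [abs_pow]
      exact pow_le_one₀ (abs_nonneg t) (by rw [abs_of_nonneg ht.1.le]; exact ht.2)
    have h2 : ‖W v (j+3) (x*t)‖ ≤ |B| := le_trans h1 (le_abs_self B)
    rw [Real.norm_eq_abs] at h2
    nlinarith [abs_nonneg (W v (j+3) (x*t)), abs_nonneg (t^(j+1))]
  · exact intervalIntegrable_const
  · -- differentiability in x
    refine Filter.Eventually.of_forall (fun t => fun ht x hx => ?_)
    rw [Set.uIoc_of_le (by norm_num : (0:ℝ) ≤ 1)] at ht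
    have hx0 : 0 < x := (hball x hx).1
    have hxt : 0 < x*t := mul_pos hx0 ht.1
    have houter : HasDerivAt (W v (j+2)) (W v (j+3) (x*t)) (x*t) :=
      Wderiv hv (show j+2 < p by omega) hxt
    have hinner : HasDerivAt (fun y : ℝ => y * t) t x := hasDerivAt_mul_const t
    have hcomp := (houter.comp x hinner).const_mul (t^j)
    exact hcomp.congr_deriv (by ring)

lemma gInt_hasDerivWithinAt_zero (hv : ContDiffOn ℝ p v (Set.Ici 0)) (hj : j + 3 ≤ p) :
    HasDerivWithinAt (gInt v j) (gInt v (j+1) 0) (Set.Ici 0) 0 := by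
  apply hasDerivWithinAt_Ici_of_tendsto_deriv (s := Set.Ioi 0)
  · exact fun x hx => ((gInt_deriv hv hj hx).differentiableAt).differentiableWithinAt
  · exact ((gInt_cont hv (by omega)) 0 Set.self_mem_Ici).mono Set.Ioi_subset_Ici_self
  · exact self_mem_nhdsWithin
  · have h1 : Tendsto (gInt v (j+1)) (𝓝[>] (0:ℝ)) (𝓝 (gInt v (j+1) 0)) :=
      (((gInt_cont hv (by omega)) 0 Set.self_mem_Ici)).mono_left
        (nhdsWithin_mono _ Set.Ioi_subset_Ici_self)
    refine h1.congr' ?_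
    filter_upwards [eventually_mem_nhdsWithin] with x hx
    exact ((gInt_deriv hv hj hx).deriv).symm

lemma gInt_derivWithin (hv : ContDiffOn ℝ p v (Set.Ici 0)) (hj : j + 3 ≤ p) :
    Set.EqOn (derivWithin (gInt v j) (Set.Ici 0)) (gInt v (j+1)) (Set.Ici 0) := by
  intro x hx
  rcases eq_or_lt_of_le (Set.mem_Ici.mp hx) with h | h
  · rw [← h]
    exact (gInt_hasDerivWithinAt_zero hv hj).derivWithin ((uniqueDiffOn_Ici 0) 0 Set.self_mem_Ici)
  · rw [derivWithin_of_mem_nhds (Ici_mem_nhds h)]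
    exact (gInt_deriv hv hj h).deriv

lemma gInt_contDiff (hv : ContDiffOn ℝ p v (Set.Ici 0)) :
    ∀ (k : ℕ) (j : ℕ), j + 2 + k ≤ p → ContDiffOn ℝ k (gInt v j) (Set.Ici 0) := by
  intro k
  induction k with
  | zero =>
    intro j hj
    rw [show ((0:ℕ) : WithTop ℕ∞) = 0 from rfl, contDiffOn_zero]
    exact gInt_cont hv (by omega)
  | succ k ih =>
    intro j hj
    rw [show (((k+1:ℕ)) : WithTop ℕ∞) = (k : WithTop ℕ∞) + 1 from by push_cast; ring,
      contDiffOn_succ_iff_derivWithin (uniqueDiffOn_Ici 0)]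
    refine ⟨?_, ?_, ?_⟩
    · intro x hx
      rcases eq_or_lt_of_le (Set.mem_Ici.mp hx) with h | h
      · rw [← h]
        exact (gInt_hasDerivWithinAt_zero hv (by omega)).differentiableWithinAt
      · exact ((gInt_deriv hv (by omega) h).differentiableAt).differentiableWithinAt
    · intro hcon
      exact absurd hcon (by simp)
    · exact (ih (j+1) (by omega)).congr (gInt_derivWithin hv (by omega))

lemma W1_eq (hv : ContDiffOn ℝ p v (Set.Ici 0)) (hp : 2 ≤ p)
    (h0 : derivWithin v (Set.Ici 0) 0 = 0) {r : ℝ} (hr : 0 < r) :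
    W v 1 r = r * gInt v 0 r := by
  have hFTC : ∫ s in (0:ℝ)..r, W v 2 s = W v 1 r - W v 1 0 := by
    apply intervalIntegral.integral_eq_sub_of_hasDeriv_right_of_le hr.le
    · exact (Wcont hv (by omega)).mono (fun x hx => hx.1)
    · intro x hx
      exact ((Wderiv hv (by omega) hx.1).hasDerivWithinAt)
    · apply ContinuousOn.intervalIntegrable
      rw [Set.uIcc_of_le hr.le]
      exact (Wcont hv hp).mono (fun x hx => hx.1)
  have h10 : W v 1 0 = 0 := by
    rw [W, iteratedDerivWithin_one]
    exact h0
  have hcv : gInt v 0 r = r⁻¹ * ∫ s in (0:ℝ)..r, W v 2 s := by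
    have h1 : gInt v 0 r = ∫ t in (0:ℝ)..1, W v 2 (t*r) := by
      rw [gInt]
      simp only [pow_zero, one_mul]
      exact intervalIntegral.integral_congr (fun t _ => by rw [mul_comm])
    rw [h1, intervalIntegral.integral_comp_mul_right (fun s => W v 2 s) hr.ne']
    norm_num [smul_eq_mul]
  rw [hcv, hFTC, h10]
  field_simp
  ring

lemma rlap_formula {N : ℕ} (hv : ContDiffOn ℝ p v (Set.Ici 0)) (hp : 2 ≤ p)
    (h0 : derivWithin v (Set.Ici 0) 0 = 0) {s : ℝ} (hs : 0 < s) :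
    deriv (deriv v) s + ((N : ℝ) - 1) / s * deriv v s
      = W v 2 s + ((N : ℝ) - 1) * gInt v 0 s := by
  have hdv : ∀ y : ℝ, 0 < y → deriv v y = W v 1 y := by
    intro y hy
    rw [← derivWithin_of_mem_nhds (Ici_mem_nhds hy), W,
      iteratedDerivWithin_one]
  have hdd : deriv (deriv v) s = W v 2 s := by
    have hee : deriv v =ᶠ[𝓝 s] W v 1 := by
      filter_upwards [Ioi_mem_nhds hs] with y hy
      exact hdv y hy
    rw [hee.deriv_eq]
    exact (Wderiv hv (by omega) hs).deriv
  rw [hdd, hdv s hs, W1_eq hv hp h0 hs]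
  field_simp

lemma reg {N : ℕ} (hN : 3 ≤ N) (hp : 2 ≤ p)
    (hv : ContDiffOn ℝ p v (Set.Ici 0)) (h0 : derivWithin v (Set.Ici 0) 0 = 0) :
    ContDiffOn ℝ (p - 2 : ℕ) (rlap N v) (Set.Ici 0) := by
  have hG2 : ContDiffOn ℝ (p-2 : ℕ) (W v 2) (Set.Ici 0) := by
    have h1 : ContDiffOn ℝ (((p - 2 : ℕ) + 1 + 1 : ℕ)) v (Set.Ici 0) := by
      have he : ((p-2:ℕ)+1+1 : ℕ) = p := by omega
      rw [he]; exact hv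
    rw [show ((((p-2:ℕ)+1+1 : ℕ)) : WithTop ℕ∞) = (((p-2:ℕ)+1 : ℕ) : WithTop ℕ∞) + 1
        from by push_cast; ring,
      contDiffOn_succ_iff_derivWithin (uniqueDiffOn_Ici 0)] at h1
    have h2 := h1.2.2
    rw [show ((((p-2:ℕ)+1 : ℕ)) : WithTop ℕ∞) = (((p-2:ℕ)) : WithTop ℕ∞) + 1
        from by push_cast; ring,
      contDiffOn_succ_iff_derivWithin (uniqueDiffOn_Ici 0)] at h2
    refine h2.2.2.congr ?_
    intro x hx
    show W v 2 x = derivWithin (derivWithin v (Set.Ici 0)) (Set.Ici 0) x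
    rw [W, iteratedDerivWithin_succ]
    refine derivWithin_congr (fun y hy => ?_) ?_
    · rw [iteratedDerivWithin_one]
    · rw [iteratedDerivWithin_one]
  have hG0 : ContDiffOn ℝ (p-2:ℕ) (gInt v 0) (Set.Ici 0) :=
    gInt_contDiff hv (p-2) 0 (by omega)
  have hGsm : ContDiffOn ℝ (p-2:ℕ)
      (fun r => W v 2 r + ((N:ℝ)-1) * gInt v 0 r) (Set.Ici 0) :=
    hG2.add (contDiffOn_const.mul hG0)
  refine hGsm.congr ?_
  intro x hx
  rcases eq_or_lt_of_le (Set.mem_Ici.mp hx) with h | h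
  · rw [← h]
    show rlap N v 0 = _
    rw [rlap, if_pos rfl]
    apply Filter.Tendsto.limUnder_eq
    have hcont : ContinuousWithinAt (fun r => W v 2 r + ((N:ℝ)-1) * gInt v 0 r)
        (Set.Ici 0) 0 := (hGsm.continuousOn (x := 0)) Set.self_mem_Ici
    have h2 : Tendsto (fun r => W v 2 r + ((N:ℝ)-1) * gInt v 0 r) (𝓝[>] (0:ℝ))
        (𝓝 (W v 2 0 + ((N:ℝ)-1) * gInt v 0 0)) :=
      hcont.mono_left (nhdsWithin_mono _ Set.Ioi_subset_Ici_self)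
    refine h2.congr' ?_
    filter_upwards [eventually_mem_nhdsWithin] with s hs
    exact (rlap_formula hv hp h0 hs).symm
  · show rlap N v x = _
    rw [rlap]
    simp only [if_neg h.ne']
    exact rlap_formula hv hp h0 h


lemma cascade_down {N : ℕ} (hN : 3 ≤ N) {v f : ℝ → ℝ}
    (hv1 : ∀ r ∈ Set.Ioi (0:ℝ), HasDerivAt v (deriv v r) r)
    (hv2 : ContinuousOn (deriv v) (Set.Ioi 0))
    (hH : ∀ r ∈ Set.Ioi (0:ℝ), HasDerivAt (fun s => s^(N-1) * deriv v s) (r^(N-1) * f r) r)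
    (hf : ContinuousOn f (Set.Ioi 0))
    {p : ℕ} {c R : ℝ} (hc : 0 < c) (hR : 1 ≤ R)
    (hfb : ∀ s, R ≤ s → f s ≤ -c * s^p) :
    ∃ c' : ℝ, 0 < c' ∧ ∃ R' : ℝ, 1 ≤ R' ∧ ∀ r, R' ≤ r → v r ≤ -c' * r^(p+2) := by
  have hR0 : (0:ℝ) < R := lt_of_lt_of_le one_pos hR
  set q : ℕ := N - 1 + p with hq
  set A : ℝ := R^(N-1) * deriv v R with hA
  have hsubIoi : ∀ {r : ℝ}, Set.Icc R r ⊆ Set.Ioi (0:ℝ) :=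
    fun hx => lt_of_lt_of_le hR0 hx.1
  -- step 1 : integral identity for H
  have step1 : ∀ r, R ≤ r → r^(N-1) * deriv v r
      = A + ∫ s in R..r, s^(N-1) * f s := by
    intro r hr
    have hderiv : ∀ x ∈ Set.uIcc R r, HasDerivAt (fun s => s^(N-1) * deriv v s)
        (x^(N-1) * f x) x := by
      intro x hx
      rw [Set.uIcc_of_le hr] at hx
      exact hH x (hsubIoi hx)
    have hint : IntervalIntegrable (fun s => s^(N-1) * f s) volume R r := by
      apply ContinuousOn.intervalIntegrable
      rw [Set.uIcc_of_le hr]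
      exact (continuousOn_pow _).mul (hf.mono hsubIoi)
    have := intervalIntegral.integral_eq_sub_of_hasDerivAt hderiv hint
    rw [this]; ring
  -- step 2 : integral bound
  have step2 : ∀ r, R ≤ r → r^(N-1) * deriv v r
      ≤ A + c * R^(q+1) / (q+1) - c * r^(q+1) / (q+1) := by
    intro r hr
    have hint : IntervalIntegrable (fun s => s^(N-1) * f s) volume R r := by
      apply ContinuousOn.intervalIntegrable
      rw [Set.uIcc_of_le hr]
      exact (continuousOn_pow _).mul (hf.mono hsubIoi)
    have hint2 : IntervalIntegrable (fun s : ℝ => -c * s^q) volume R r :=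
      (Continuous.intervalIntegrable (continuous_const.mul (continuous_pow q)) R r)
    have hmono : ∫ s in R..r, s^(N-1) * f s ≤ ∫ s in R..r, -c * s^q := by
      apply intervalIntegral.integral_mono_on hr hint hint2
      intro x hx
      have hx0 : (0:ℝ) ≤ x := le_trans hR0.le hx.1
      have h1 : f x ≤ -c * x^p := hfb x hx.1
      calc x^(N-1) * f x ≤ x^(N-1) * (-c * x^p) :=
            mul_le_mul_of_nonneg_left h1 (pow_nonneg hx0 _)
        _ = -c * x^q := by rw [hq, pow_add]; ring
    have hval : ∫ s in R..r, -c * s^q = -c * ((r^(q+1) - R^(q+1)) / (q+1)) := by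
      rw [intervalIntegral.integral_const_mul, integral_pow]
    have := step1 r hr
    rw [this]
    rw [hval] at hmono
    have hq1 : (0:ℝ) < (q:ℝ)+1 := by positivity
    calc A + ∫ s in R..r, s^(N-1) * f s ≤ A + -c * ((r^(q+1) - R^(q+1)) / (q+1)) := by
          linarith
      _ = A + c * R^(q+1) / (q+1) - c * r^(q+1) / (q+1) := by ring
  -- step 2' : clean derivative bound
  set e : ℝ := c / (2*((q:ℝ)+1)) with he
  have hepos : 0 < e := by positivity
  set D : ℝ := |A| + c * R^(q+1) / ((q:ℝ)+1) with hD
  have hD0 : 0 ≤ D := by positivity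
  set R₂ : ℝ := max R (D/e + 1) with hR₂
  have hR₂R : R ≤ R₂ := le_max_left _ _
  have hR₂1 : 1 ≤ R₂ := le_trans hR hR₂R
  have step2' : ∀ r, R₂ ≤ r → deriv v r ≤ -e * r^(p+1) := by
    intro r hr
    have hrR : R ≤ r := le_trans hR₂R hr
    have hr1 : (1:ℝ) ≤ r := le_trans hR₂1 hr
    have hr0 : (0:ℝ) < r := lt_of_lt_of_le one_pos hr1
    have hrq : r ≤ r^(q+1) := le_self_pow₀ hr1 (by omega)
    have hrB : D/e + 1 ≤ r := le_trans (le_max_right _ _) hr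
    have hkey : D ≤ e * r^(q+1) := by
      have h1 : D ≤ e * r := by
        rw [div_add' _ _ _ hepos.ne'] at hrB
        rw [div_le_iff₀ hepos] at hrB
        nlinarith
      nlinarith
    have hstep := step2 r hrR
    have h2 : r^(N-1) * deriv v r ≤ -e * r^(q+1) := by
      have hA' : A ≤ |A| := le_abs_self A
      have hce : c / ((q:ℝ)+1) = 2*e := by
        rw [he]; field_simp
      have hce2 : c * r^(q+1) / ((q:ℝ)+1) = 2*e*r^(q+1) := by
        rw [mul_comm c (r^(q+1)), mul_div_assoc, hce]; ring
      calc r^(N-1) * deriv v r ≤ A + c * R^(q+1) / ((q:ℝ)+1) - c * r^(q+1) / ((q:ℝ)+1) := hstep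
        _ ≤ D - c * r^(q+1) / ((q:ℝ)+1) := by rw [hD]; linarith
        _ = D - 2*e*r^(q+1) := by rw [hce2]
        _ ≤ e * r^(q+1) - 2*e*r^(q+1) := by linarith
        _ = -e * r^(q+1) := by ring
    have hpow : r^(q+1) = r^(N-1) * r^(p+1) := by
      rw [← pow_add]
      congr 1
    rw [hpow] at h2
    have h3 : r^(N-1) * deriv v r ≤ r^(N-1) * (-e * r^(p+1)) := by nlinarith
    exact le_of_mul_le_mul_left h3 (pow_pos hr0 _)
  -- step 3 : integrate
  have hR₂0 : (0:ℝ) < R₂ := lt_of_lt_of_le one_pos hR₂1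
  set c₃ : ℝ := e/((p:ℝ)+2) with hc₃
  have hc₃pos : 0 < c₃ := by positivity
  have step3 : ∀ r, R₂ ≤ r → v r ≤ v R₂ + c₃ * R₂^(p+2) - c₃ * r^(p+2) := by
    intro r hr
    have hsub2 : Set.Icc R₂ r ⊆ Set.Ioi (0:ℝ) := fun x hx => lt_of_lt_of_le hR₂0 hx.1
    have hid : ∫ s in R₂..r, deriv v s = v r - v R₂ := by
      apply intervalIntegral.integral_eq_sub_of_hasDerivAt
      · intro x hx
        rw [Set.uIcc_of_le hr] at hx
        exact hv1 x (hsub2 hx)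
      · apply ContinuousOn.intervalIntegrable
        rw [Set.uIcc_of_le hr]
        exact hv2.mono hsub2
    have hint1 : IntervalIntegrable (deriv v) volume R₂ r := by
      apply ContinuousOn.intervalIntegrable
      rw [Set.uIcc_of_le hr]
      exact hv2.mono hsub2
    have hint2 : IntervalIntegrable (fun s : ℝ => -e * s^(p+1)) volume R₂ r :=
      Continuous.intervalIntegrable (continuous_const.mul (continuous_pow (p+1))) _ _
    have hmono : ∫ s in R₂..r, deriv v s ≤ ∫ s in R₂..r, -e * s^(p+1) := by
      apply intervalIntegral.integral_mono_on hr hint1 hint2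
      intro x hx
      exact step2' x hx.1
    have hval : ∫ s in R₂..r, -e * s^(p+1) = -e * ((r^(p+2) - R₂^(p+2)) / ((p:ℝ)+1+1)) := by
      rw [intervalIntegral.integral_const_mul, integral_pow]
      norm_num
    rw [hid, hval] at hmono
    have hp2 : ((p:ℝ)+1+1) = (p:ℝ)+2 := by ring
    rw [hp2] at hmono
    have h4 : -e * ((r^(p+2) - R₂^(p+2))/((p:ℝ)+2)) = c₃*R₂^(p+2) - c₃*r^(p+2) := by
      rw [hc₃]; field_simp; ring
    rw [h4] at hmono
    linarith
  -- step 4 : conclude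
  obtain ⟨C₃, hC₃⟩ : ∃ C₃ : ℝ, C₃ = v R₂ + c₃ * R₂^(p+2) := ⟨_, rfl⟩
  refine ⟨c₃/2, by positivity, max R₂ (|C₃|/(c₃/2) + 1),
    le_trans hR₂1 (le_max_left _ _), ?_⟩
  intro r hr
  have hr1 : (1:ℝ) ≤ r := le_trans (le_trans hR₂1 (le_max_left _ _)) hr
  have hrp : r ≤ r^(p+2) := le_self_pow₀ hr1 (by omega)
  have hC : C₃ ≤ (c₃/2) * r^(p+2) := by
    have h1 : |C₃|/(c₃/2) + 1 ≤ r := le_trans (le_max_right _ _) hr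
    have h2 : |C₃| ≤ (c₃/2) * r := by
      rw [div_add' _ _ _ (by positivity : c₃/2 ≠ 0)] at h1
      rw [div_le_iff₀ (by positivity)] at h1
      nlinarith [abs_nonneg C₃]
    calc C₃ ≤ |C₃| := le_abs_self C₃
      _ ≤ (c₃/2) * r := h2
      _ ≤ (c₃/2) * r^(p+2) := by nlinarith
  have h3 := step3 r (le_trans (le_max_left _ _) hr)
  rw [← hC₃] at h3
  calc v r ≤ C₃ - c₃ * r^(p+2) := by linarith
    _ ≤ (c₃/2) * r^(p+2) - c₃ * r^(p+2) := by linarith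
    _ = -(c₃/2) * r^(p+2) := by ring

lemma cascade_up {N : ℕ} (hN : 3 ≤ N) {v f : ℝ → ℝ}
    (hv1 : ∀ r ∈ Set.Ioi (0:ℝ), HasDerivAt v (deriv v r) r)
    (hv2 : ContinuousOn (deriv v) (Set.Ioi 0))
    (hH : ∀ r ∈ Set.Ioi (0:ℝ), HasDerivAt (fun s => s^(N-1) * deriv v s) (r^(N-1) * f r) r)
    (hf : ContinuousOn f (Set.Ioi 0))
    {p : ℕ} {c R : ℝ} (hc : 0 < c) (hR : 1 ≤ R)
    (hfb : ∀ s, R ≤ s → c * s^p ≤ f s) :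
    ∃ c' : ℝ, 0 < c' ∧ ∃ R' : ℝ, 1 ≤ R' ∧ ∀ r, R' ≤ r → c' * r^(p+2) ≤ v r := by
  have hdneg : ∀ y ∈ Set.Ioi (0:ℝ), deriv (fun s => -v s) y = -deriv v y := by
    intro y hy
    exact deriv.neg
  have hv1' : ∀ r ∈ Set.Ioi (0:ℝ), HasDerivAt (fun s => -v s) (deriv (fun s => -v s) r) r := by
    intro r hr
    rw [hdneg r hr]
    exact (hv1 r hr).neg
  have hv2' : ContinuousOn (deriv (fun s => -v s)) (Set.Ioi 0) := by
    refine (hv2.neg).congr ?_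
    intro y hy
    exact hdneg y hy
  have hH' : ∀ r ∈ Set.Ioi (0:ℝ), HasDerivAt (fun s => s^(N-1) * deriv (fun s => -v s) s)
      (r^(N-1) * (-f r)) r := by
    intro r hr
    have h1 : ∀ᶠ y in 𝓝 r, y^(N-1) * deriv (fun s => -v s) y = -(y^(N-1) * deriv v y) := by
      filter_upwards [Ioi_mem_nhds hr] with y hy
      rw [hdneg y hy]; ring
    have h2 : HasDerivAt (fun s => -(s^(N-1) * deriv v s)) (-(r^(N-1) * f r)) r := (hH r hr).neg
    have h3 := h2.congr_of_eventuallyEq (by filter_upwards [h1] with y hy using hy)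
    have : r^(N-1) * (-f r) = -(r^(N-1) * f r) := by ring
    rw [this]
    exact h3
  have hfb' : ∀ s, R ≤ s → (fun s => -f s) s ≤ -c * s^p := by
    intro s hs
    have := hfb s hs
    simp only
    linarith
  obtain ⟨c', hc', R', hR', hbound⟩ := cascade_down hN hv1' hv2' hH' hf.neg hc hR hfb'
  refine ⟨c', hc', R', hR', ?_⟩
  intro r hr
  have := hbound r hr
  linarith

end RadialAux

/-- Let `m ≥ 3`, `N ≥ 3` and `(a_0,…,a_{m-1}) ∈ ℝ^m` with `a_{m-2} = 0`.
If `u ∈ C^{2m}([0,∞))` is the radial solution of `Δ_N^m u = -e^u` on `(0,∞)` with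
`(Δ_N^i u)'(0) = 0` and `(Δ_N^i u)(0) = a_i`, then
`V(a) = ω_{N-1} ∫_0^∞ e^{u(r)} r^{N-1} dr < ∞` (i.e. the integrand is integrable on
`(0,∞)`), and there are `M₀ > 0`, `R₀ > 0` with `u(r) ≤ -M₀ r^{2m-4}` for `r ≥ R₀`. -/
theorem finite_volume_and_decay_of_radial_solution
    (m N : ℕ) (hm : 3 ≤ m) (hN : 3 ≤ N)
    (a : Fin m → ℝ) (ha : a ⟨m - 2, by omega⟩ = 0)
    (u : ℝ → ℝ)
    (hu : ContDiffOn ℝ (2*m : ℕ) u (Set.Ici 0))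
    (heq : ∀ r : ℝ, 0 < r → (rlap N)^[m] u r = -Real.exp (u r))
    (hder : ∀ i : Fin m, derivWithin ((rlap N)^[(i:ℕ)] u) (Set.Ici 0) 0 = 0)
    (hval : ∀ i : Fin m, (rlap N)^[(i:ℕ)] u 0 = a i) :
    IntegrableOn (fun r => Real.exp (u r) * r^(N-1)) (Set.Ioi 0) ∧
    ∃ M₀ : ℝ, 0 < M₀ ∧ ∃ R₀ : ℝ, 0 < R₀ ∧
      ∀ r : ℝ, R₀ ≤ r → u r ≤ -M₀ * r^(2*m-4) := by
  set w : ℕ → ℝ → ℝ := fun k => (rlap N)^[k] u with hw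
  have hNn : N - 1 ≠ 0 := by omega
  -- regularity chain
  have chain : ∀ k, k ≤ m → ContDiffOn ℝ ((2*m - 2*k : ℕ)) (w k) (Set.Ici 0) := by
    intro k
    induction k with
    | zero =>
      intro _
      simpa [hw] using hu
    | succ k ih =>
      intro hk
      have h1 := ih (by omega)
      have h2 : w (k+1) = rlap N (w k) := by
        simp only [hw]; rw [Function.iterate_succ_apply']
      rw [h2]
      have h3 := RadialAux.reg (N := N) hN (p := 2*m - 2*k) (by omega) h1
        (hder ⟨k, by omega⟩)
      have he : 2*m - 2*k - 2 = 2*m - 2*(k+1) := by omega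
      rw [he] at h3
      exact h3
  have hCont : ∀ k, k ≤ m → ContinuousOn (w k) (Set.Ici 0) :=
    fun k hk => (chain k hk).continuousOn
  have hucont : ContinuousOn u (Set.Ici 0) := hu.continuousOn
  -- interior regularity package
  have hpeel : ∀ k, k < m → DifferentiableOn ℝ (w k) (Set.Ioi 0) ∧
      DifferentiableOn ℝ (deriv (w k)) (Set.Ioi 0) ∧
      ContinuousOn (deriv (w k)) (Set.Ioi 0) := by
    intro k hk
    have h2 : ContDiffOn ℝ (((1:ℕ)+1 : ℕ)) (w k) (Set.Ioi 0) := by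
      refine ((chain k (by omega)).mono Set.Ioi_subset_Ici_self).of_le ?_
      exact_mod_cast (by omega : (1:ℕ)+1 ≤ 2*m-2*k)
    rw [show ((((1:ℕ)+1 : ℕ)) : WithTop ℕ∞) = ((1:ℕ) : WithTop ℕ∞) + 1 from by push_cast; ring,
      contDiffOn_succ_iff_deriv_of_isOpen isOpen_Ioi] at h2
    have h3 := h2.2.2
    have h3' : ContinuousOn (deriv (w k)) (Set.Ioi 0) := h3.continuousOn
    rw [show (((1:ℕ)) : WithTop ℕ∞) = ((0:ℕ) : WithTop ℕ∞) + 1 from by push_cast; ring,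
      contDiffOn_succ_iff_deriv_of_isOpen isOpen_Ioi] at h3
    exact ⟨h2.1, h3.1, h3'⟩
  have hDa : ∀ k, k < m → ∀ r ∈ Set.Ioi (0:ℝ), HasDerivAt (w k) (deriv (w k) r) r :=
    fun k hk r hr => (((hpeel k hk).1 r hr).differentiableAt (isOpen_Ioi.mem_nhds hr)).hasDerivAt
  have hDd : ∀ k, k < m → ∀ r ∈ Set.Ioi (0:ℝ),
      HasDerivAt (deriv (w k)) (deriv (deriv (w k)) r) r :=
    fun k hk r hr => (((hpeel k hk).2.1 r hr).differentiableAt (isOpen_Ioi.mem_nhds hr)).hasDerivAt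
  have hHder : ∀ k, k < m → ∀ r ∈ Set.Ioi (0:ℝ),
      HasDerivAt (fun s => s^(N-1) * deriv (w k) s) (r^(N-1) * w (k+1) r) r := by
    intro k hk r hr
    have hr0 : (0:ℝ) < r := hr
    have h1 : HasDerivAt (fun s : ℝ => s^(N-1)) (((N-1 : ℕ) : ℝ) * r^(N-1-1)) r :=
      hasDerivAt_pow (N-1) r
    have h3 := h1.mul (hDd k hk r hr)
    have hiter : w (k+1) r = deriv (deriv (w k)) r + ((N:ℝ)-1)/r * deriv (w k) r := by
      simp only [hw]
      rw [Function.iterate_succ_apply', rlap]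
      simp only [if_neg (ne_of_gt hr0)]
    have hval2 : r^(N-1) * w (k+1) r
        = ((N-1 : ℕ) : ℝ) * r^(N-1-1) * deriv (w k) r + r^(N-1) * deriv (deriv (w k)) r := by
      rw [hiter]
      have hcast : ((N-1 : ℕ) : ℝ) = (N:ℝ) - 1 := by
        rw [Nat.cast_sub (by omega)]; norm_num
      have hpow : r^(N-1) = r^(N-1-1) * r := by
        rw [← pow_succ]; congr 1; omega
      rw [hcast, hpow]
      field_simp
      ring
    rw [hval2]
    exact h3
  -- representation formula
  have hrep : ∀ k, k < m → ∀ r : ℝ, 0 < r →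
      r^(N-1) * deriv (w k) r = ∫ s in (0:ℝ)..r, s^(N-1) * w (k+1) s := by
    intro k hk r hr
    have hdW : ContinuousOn (derivWithin (w k) (Set.Ici 0)) (Set.Ici 0) :=
      (chain k (by omega)).continuousOn_derivWithin (uniqueDiffOn_Ici 0)
        (by exact_mod_cast (by omega : (1:ℕ) ≤ 2*m-2*k))
    have hHcont : ContinuousOn (fun s => s^(N-1) * deriv (w k) s) (Set.Icc 0 r) := by
      refine (((continuousOn_pow (N-1)).mul (hdW.mono (fun x hx => hx.1))).congr ?_)
      intro x hx
      rcases eq_or_lt_of_le hx.1 with h|h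
      · simp [← h, zero_pow hNn]
      · simp only [Pi.mul_apply, derivWithin_of_mem_nhds (Ici_mem_nhds h)]
    have hioo : ∀ x ∈ Set.Ioo 0 r,
        HasDerivWithinAt (fun s => s^(N-1) * deriv (w k) s) (x^(N-1) * w (k+1) x)
          (Set.Ioi x) x :=
      fun x hx => (hHder k hk x hx.1).hasDerivWithinAt
    have hint : IntervalIntegrable (fun s => s^(N-1) * w (k+1) s) volume 0 r := by
      apply ContinuousOn.intervalIntegrable
      rw [Set.uIcc_of_le hr.le]
      exact (continuousOn_pow _).mul ((hCont (k+1) (by omega)).mono (fun x hx => hx.1))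
    have hFTC := intervalIntegral.integral_eq_sub_of_hasDeriv_right_of_le hr.le hHcont hioo hint
    rw [hFTC]
    simp [zero_pow hNn]
  -- exp integral positivity
  have hexpint : ∀ r : ℝ, 0 < r →
      IntervalIntegrable (fun s => s^(N-1) * Real.exp (u s)) volume 0 r := by
    intro r hr
    apply ContinuousOn.intervalIntegrable
    rw [Set.uIcc_of_le hr.le]
    exact (continuousOn_pow _).mul
      ((Real.continuous_exp.comp_continuousOn (hucont.mono (fun x hx => hx.1))))
  have hFpos : ∀ r : ℝ, 0 < r → 0 < ∫ s in (0:ℝ)..r, s^(N-1) * Real.exp (u s) := by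
    intro r hr
    apply intervalIntegral.intervalIntegral_pos_of_pos_on (hexpint r hr)
    · exact fun x hx => mul_pos (pow_pos hx.1 _) (Real.exp_pos _)
    · exact hr
  -- H for k = m-1
  have hHm1 : ∀ r : ℝ, 0 < r →
      r^(N-1) * deriv (w (m-1)) r = -∫ s in (0:ℝ)..r, s^(N-1) * Real.exp (u s) := by
    intro r hr
    rw [hrep (m-1) (by omega) r hr, show m-1+1 = m from by omega,
      ← intervalIntegral.integral_neg]
    apply intervalIntegral.integral_congr_ae
    refine Filter.Eventually.of_forall (fun x hx => ?_)
    rw [Set.uIoc_of_le hr.le] at hx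
    have := heq x hx.1
    simp only [hw]
    rw [this]
    ring
  have hdneg : ∀ r : ℝ, 0 < r → deriv (w (m-1)) r < 0 := by
    intro r hr
    have h1 := hHm1 r hr
    have h2 := hFpos r hr
    nlinarith [pow_pos hr (N-1)]
  have hanti : StrictAntiOn (w (m-1)) (Set.Ioi 0) := by
    apply strictAntiOn_of_deriv_neg (convex_Ioi 0)
      ((hCont (m-1) (by omega)).mono Set.Ioi_subset_Ici_self)
    intro x hx
    rw [interior_Ioi] at hx
    exact hdneg x hx
  by_cases hcase : ∀ r : ℝ, 0 < r → 0 ≤ w (m-1) r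
  · exfalso
    have hwpos : ∀ r : ℝ, 0 < r → 0 < w (m-1) r := by
      intro r hr
      have h1 := hanti (Set.mem_Ioi.mpr hr) (Set.mem_Ioi.mpr (by linarith : (0:ℝ) < r+1))
        (lt_add_one r)
      have h2 := hcase (r+1) (by linarith)
      linarith
    have hd2pos : ∀ r : ℝ, 0 < r → 0 < deriv (w (m-2)) r := by
      intro r hr
      have h1 := hrep (m-2) (by omega) r hr
      rw [show m-2+1 = m-1 from by omega] at h1
      have h2 : 0 < ∫ s in (0:ℝ)..r, s^(N-1) * w (m-1) s := by
        apply intervalIntegral.intervalIntegral_pos_of_pos_on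
        · apply ContinuousOn.intervalIntegrable
          rw [Set.uIcc_of_le hr.le]
          exact (continuousOn_pow _).mul ((hCont (m-1) (by omega)).mono (fun x hx => hx.1))
        · exact fun x hx => mul_pos (pow_pos hx.1 _) (hwpos x hx.1)
        · exact hr
      nlinarith [pow_pos hr (N-1)]
    have hmono2 : StrictMonoOn (w (m-2)) (Set.Ici 0) := by
      apply strictMonoOn_of_deriv_pos (convex_Ici 0) (hCont (m-2) (by omega))
      intro x hx
      rw [interior_Ici] at hx
      exact hd2pos x hx
    have hw20 : w (m-2) 0 = 0 := by
      have h1 := hval ⟨m-2, by omega⟩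
      exact h1.trans ha
    have hc₁ : 0 < w (m-2) 1 := by
      have h1 := hmono2 Set.self_mem_Ici (Set.mem_Ici.mpr (by norm_num : (0:ℝ) ≤ 1)) one_pos
      rwa [hw20] at h1
    have hlow : ∀ r : ℝ, 1 ≤ r → w (m-2) 1 ≤ w (m-2) r := by
      intro r hr1
      rcases eq_or_lt_of_le hr1 with h|h
      · rw [← h]
      · exact (hmono2 (Set.mem_Ici.mpr (by norm_num : (0:ℝ) ≤ 1))
          (Set.mem_Ici.mpr (by linarith)) h).le
    have hcascade : ∀ j : ℕ, j ≤ m-2 → ∃ c : ℝ, 0 < c ∧ ∃ R : ℝ, 1 ≤ R ∧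
        ∀ r, R ≤ r → c * r^(2*j) ≤ w (m-2-j) r := by
      intro j
      induction j with
      | zero =>
        intro _
        refine ⟨w (m-2) 1, hc₁, 1, le_refl 1, fun r hr => ?_⟩
        simpa using hlow r hr
      | succ j ih =>
        intro hj
        obtain ⟨c, hc, R, hR, hb⟩ := ih (by omega)
        have hklt : m-2-(j+1) < m := by omega
        have hkk : (m-2-(j+1)) + 1 = m-2-j := by omega
        have hH' := hHder (m-2-(j+1)) hklt
        rw [hkk] at hH'
        have hf' : ContinuousOn (w (m-2-j)) (Set.Ioi 0) :=
          (hCont (m-2-j) (by omega)).mono Set.Ioi_subset_Ici_self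
        obtain ⟨c', hc', R', hR', hb'⟩ := RadialAux.cascade_up hN (hDa _ hklt)
          ((hpeel _ hklt).2.2) hH' hf' hc hR hb
        refine ⟨c', hc', R', hR', fun r hr => ?_⟩
        have h1 := hb' r hr
        rw [show 2*j+2 = 2*(j+1) from by ring] at h1
        exact h1
    obtain ⟨c, hc, R, hRR, hub⟩ := hcascade (m-2) (le_refl _)
    rw [show m-2-(m-2) = 0 from by omega] at hub
    have hub' : ∀ r : ℝ, R ≤ r → c * r^(2*(m-2)) ≤ u r := by
      intro r hr
      have h1 := hub r hr
      simpa [hw] using h1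
    obtain ⟨R₄, hR₄R, hR₄1, hR₄N⟩ : ∃ R₄ : ℝ, R ≤ R₄ ∧ 1 ≤ R₄ ∧ 2*(N:ℝ)/c + 1 ≤ R₄ :=
      ⟨max R (max 1 (2*(N:ℝ)/c + 1)), le_max_left _ _,
        le_trans (le_max_left _ _) (le_max_right _ _),
        le_trans (le_max_right _ _) (le_max_right _ _)⟩
    have hR₄0 : 0 < R₄ := lt_of_lt_of_le one_pos hR₄1
    have hexp : ∀ s : ℝ, R₄ ≤ s → (s:ℝ)^(2*N) ≤ Real.exp (u s) := by
      intro s hs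
      have hs1 : 1 ≤ s := le_trans hR₄1 hs
      have hs0 : 0 < s := lt_of_lt_of_le one_pos hs1
      have h2 : s^2 ≤ s^(2*(m-2)) := pow_le_pow_right₀ hs1 (by omega)
      have hlog : Real.log s ≤ s := le_trans (Real.log_le_sub_one_of_pos hs0) (by linarith)
      have hcs : 2*(N:ℝ) ≤ c*s := by
        have h3 : 2*(N:ℝ)/c + 1 ≤ s := le_trans hR₄N hs
        have h4 : 2*(N:ℝ)/c ≤ s - 1 := by linarith
        rw [div_le_iff₀ hc] at h4
        nlinarith
      have h5 : 2*(N:ℝ) * Real.log s ≤ c * s^2 := by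
        have hln : 0 ≤ Real.log s := Real.log_nonneg hs1
        calc 2*(N:ℝ) * Real.log s ≤ c*s*Real.log s := by nlinarith
          _ ≤ c*s*s := by nlinarith [mul_pos hc hs0]
          _ = c*s^2 := by ring
      have h6 : 2*(N:ℝ) * Real.log s ≤ u s := by
        have h7 := hub' s (le_trans hR₄R hs)
        nlinarith [mul_le_mul_of_nonneg_left h2 hc.le]
      calc s^(2*N) = Real.exp (Real.log s)^(2*N) := by rw [Real.exp_log hs0]
        _ = Real.exp ((2*N : ℕ) * Real.log s) := by rw [Real.exp_nat_mul]
        _ ≤ Real.exp (u s) := Real.exp_le_exp.mpr (by push_cast; linarith)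
    have hFlow : ∀ r : ℝ, R₄ ≤ r →
        (r^(3*N) - R₄^(3*N))/(3*(N:ℝ)) ≤ ∫ s in (0:ℝ)..r, s^(N-1)*Real.exp (u s) := by
      intro r hr
      have hr0 : 0 < r := lt_of_lt_of_le hR₄0 hr
      have hint1 := hexpint R₄ hR₄0
      have hint2 : IntervalIntegrable (fun s => s^(N-1)*Real.exp (u s)) volume R₄ r := by
        apply ContinuousOn.intervalIntegrable
        rw [Set.uIcc_of_le hr]
        refine (continuousOn_pow _).mul
          (Real.continuous_exp.comp_continuousOn (hucont.mono ?_))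
        exact fun x hx => le_trans hR₄0.le hx.1
      have hsplit := intervalIntegral.integral_add_adjacent_intervals hint1 hint2
      have h5 : ∫ s in R₄..r, (s^(3*N-1) : ℝ) ≤ ∫ s in R₄..r, s^(N-1)*Real.exp (u s) := by
        apply intervalIntegral.integral_mono_on hr
          (Continuous.intervalIntegrable (continuous_pow _) _ _) hint2
        intro x hx
        have hx0 : 0 < x := lt_of_lt_of_le hR₄0 hx.1
        have h6 := hexp x hx.1
        calc x^(3*N-1) = x^(N-1) * x^(2*N) := by rw [← pow_add]; congr 1; omega
          _ ≤ x^(N-1) * Real.exp (u x) := by nlinarith [pow_pos hx0 (N-1)]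
      have h7 : ∫ s in R₄..r, (s^(3*N-1) : ℝ) = (r^(3*N) - R₄^(3*N))/(3*(N:ℝ)) := by
        rw [integral_pow, show (3*N-1)+1 = 3*N from by omega]
        congr 1
        rw [Nat.cast_sub (by omega : 1 ≤ 3*N)]
        push_cast
        ring
      have h8 : 0 < ∫ s in (0:ℝ)..R₄, s^(N-1)*Real.exp (u s) := hFpos R₄ hR₄0
      rw [h7] at h5
      linarith [hsplit, h5, h8]
    have hC₀ : ∀ r : ℝ, 1 ≤ r → w (m-1) r ≤ w (m-1) 1 := by
      intro r hr1
      rcases eq_or_lt_of_le hr1 with h|h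
      · rw [← h]
      · exact (hanti (Set.mem_Ioi.mpr one_pos) (Set.mem_Ioi.mpr (by linarith)) h).le
    set C₀ := w (m-1) 1 with hC₀def
    set X := 3*(N:ℝ)*2^(N-1)*(|C₀|+1) with hX
    have hXpos : 0 < X := by positivity
    obtain ⟨r₅, hr₅R₄, hr₅X⟩ : ∃ r₅ : ℝ, R₄ ≤ r₅ ∧ R₄^(3*N) + X ≤ r₅ :=
      ⟨max R₄ (R₄^(3*N) + X), le_max_left _ _, le_max_right _ _⟩
    have hr₅1 : 1 ≤ r₅ := le_trans hR₄1 hr₅R₄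
    have hr₅0 : 0 < r₅ := lt_of_lt_of_le one_pos hr₅1
    have h2r₅ : (0:ℝ) < 2*r₅ := by linarith
    set F₅ := ∫ s in (0:ℝ)..r₅, s^(N-1)*Real.exp (u s) with hF₅
    have hF₅pos : 0 < F₅ := hFpos r₅ hr₅0
    have hFmono : ∀ s : ℝ, r₅ ≤ s → F₅ ≤ ∫ t in (0:ℝ)..s, t^(N-1)*Real.exp (u t) := by
      intro s hs
      have hint2 : IntervalIntegrable (fun t => t^(N-1)*Real.exp (u t)) volume r₅ s := by
        apply ContinuousOn.intervalIntegrable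
        rw [Set.uIcc_of_le hs]
        refine (continuousOn_pow _).mul
          (Real.continuous_exp.comp_continuousOn (hucont.mono ?_))
        exact fun x hx => le_trans hr₅0.le hx.1
      have hsplit := intervalIntegral.integral_add_adjacent_intervals (hexpint r₅ hr₅0) hint2
      have hpos2 : 0 ≤ ∫ t in r₅..s, t^(N-1)*Real.exp (u t) := by
        apply intervalIntegral.integral_nonneg hs
        intro x hx
        have hx0 : 0 < x := lt_of_lt_of_le hr₅0 hx.1
        positivity
      linarith [hsplit]
    have hdbound : ∀ s ∈ Set.Icc r₅ (2*r₅),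
        deriv (w (m-1)) s ≤ -(F₅/(2*r₅)^(N-1)) := by
      intro s hs
      have hs0 : 0 < s := lt_of_lt_of_le hr₅0 hs.1
      have h1 := hHm1 s hs0
      have h2 := hFmono s hs.1
      have hsN : 0 < s^(N-1) := pow_pos hs0 _
      have h3 : deriv (w (m-1)) s ≤ -F₅/s^(N-1) := by
        rw [le_div_iff₀ hsN]
        nlinarith [h1, h2]
      have h4 : -F₅/s^(N-1) ≤ -(F₅/(2*r₅)^(N-1)) := by
        rw [neg_div, neg_le_neg_iff, div_le_div_iff₀ (by positivity) hsN]
        have h5 : s^(N-1) ≤ (2*r₅)^(N-1) :=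
          pow_le_pow_left₀ hs0.le (by linarith [hs.2]) _
        nlinarith [h5, hF₅pos]
      linarith
    have hintd : IntervalIntegrable (deriv (w (m-1))) volume r₅ (2*r₅) := by
      apply ContinuousOn.intervalIntegrable
      rw [Set.uIcc_of_le (by linarith : r₅ ≤ 2*r₅)]
      exact ((hpeel (m-1) (by omega)).2.2).mono
        (fun x hx => Set.mem_Ioi.mpr (lt_of_lt_of_le hr₅0 hx.1))
    have hid : ∫ s in r₅..(2*r₅), deriv (w (m-1)) s = w (m-1) (2*r₅) - w (m-1) r₅ := by
      apply intervalIntegral.integral_eq_sub_of_hasDerivAt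
      · intro x hx
        rw [Set.uIcc_of_le (by linarith : r₅ ≤ 2*r₅)] at hx
        exact hDa (m-1) (by omega) x (Set.mem_Ioi.mpr (lt_of_lt_of_le hr₅0 hx.1))
      · exact hintd
    have hmono3 : ∫ s in r₅..(2*r₅), deriv (w (m-1)) s
        ≤ ∫ s in r₅..(2*r₅), (-(F₅/(2*r₅)^(N-1)) : ℝ) :=
      intervalIntegral.integral_mono_on (by linarith) hintd intervalIntegrable_const hdbound
    have hconst : ∫ s in r₅..(2*r₅), (-(F₅/(2*r₅)^(N-1)) : ℝ)
        = -(r₅ * (F₅/(2*r₅)^(N-1))) := by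
      rw [intervalIntegral.integral_const, smul_eq_mul]
      ring
    have h2ge : (|C₀|+1) ≤ r₅ * (F₅/(2*r₅)^(N-1)) := by
      have hp1 : (2*r₅)^(N-1) = 2^(N-1) * r₅^(N-1) := mul_pow 2 r₅ (N-1)
      have hPpos : (0:ℝ) < r₅^(N-1) := pow_pos hr₅0 _
      have hTpos : (0:ℝ) < 2^(N-1) := by positivity
      have h4 : X * r₅^(N-1) ≤ r₅^(3*N) - R₄^(3*N) := by
        have h5 : r₅^(3*N) = r₅ * r₅^(3*N-1) := by
          rw [← pow_succ']
          congr 1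
          omega
        have h6 : r₅^(N-1) ≤ r₅^(3*N-1) := pow_le_pow_right₀ hr₅1 (by omega)
        have h7 : (1:ℝ) ≤ r₅^(3*N-1) := one_le_pow₀ hr₅1
        have hR₄3N : (0:ℝ) ≤ R₄^(3*N) := by positivity
        have h8 : (R₄^(3*N) + X) * r₅^(3*N-1) ≤ r₅ * r₅^(3*N-1) :=
          mul_le_mul_of_nonneg_right hr₅X (by positivity)
        have h9 : X * r₅^(N-1) ≤ X * r₅^(3*N-1) :=
          mul_le_mul_of_nonneg_left h6 hXpos.le
        have h10 : R₄^(3*N) * 1 ≤ R₄^(3*N) * r₅^(3*N-1) :=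
          mul_le_mul_of_nonneg_left h7 hR₄3N
        nlinarith [h5, h8, h9, h10]
      have hFge : X * r₅^(N-1) / (3*(N:ℝ)) ≤ F₅ := by
        have h3 := hFlow r₅ hr₅R₄
        have h11 : X * r₅^(N-1) / (3*(N:ℝ)) ≤ (r₅^(3*N) - R₄^(3*N))/(3*(N:ℝ)) :=
          div_le_div_of_nonneg_right h4 (by positivity)
        exact le_trans h11 h3
      have hXF : 2^(N-1) * (|C₀|+1) * r₅^(N-1) ≤ F₅ := by
        have h12 : X * r₅^(N-1) / (3*(N:ℝ)) = 2^(N-1) * (|C₀|+1) * r₅^(N-1) := by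
          rw [hX]
          field_simp
        rw [h12] at hFge
        exact hFge
      have h13 : (|C₀|+1) ≤ F₅/(2*r₅)^(N-1) := by
        rw [hp1, le_div_iff₀ (by positivity)]
        nlinarith [hXF]
      have h14 : 0 < F₅/(2*r₅)^(N-1) := by positivity
      nlinarith [h13, h14, hr₅1]
    have hfinal : w (m-1) (2*r₅) < 0 := by
      rw [hid, hconst] at hmono3
      have h15 := hC₀ r₅ hr₅1
      have h16 := le_abs_self C₀
      linarith [hmono3, h2ge]
    exact absurd (hcase (2*r₅) h2r₅) (not_le.mpr hfinal)
  · push_neg at hcase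
    obtain ⟨r₁, hr₁pos, hr₁neg⟩ := hcase
    set R₁ := max r₁ 1 with hR₁
    have hR₁1 : (1:ℝ) ≤ R₁ := le_max_right _ _
    set c₀ := -(w (m-1) r₁) with hc₀
    have hc₀pos : 0 < c₀ := by rw [hc₀]; linarith
    have hub : ∀ s : ℝ, R₁ ≤ s → w (m-1) s ≤ -c₀ * s^0 := by
      intro s hs
      have hr₁s : r₁ ≤ s := le_trans (le_max_left _ _) hs
      have h1 : w (m-1) s ≤ w (m-1) r₁ := by
        rcases eq_or_lt_of_le hr₁s with h|h
        · rw [← h]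
        · exact (hanti (Set.mem_Ioi.mpr hr₁pos)
            (Set.mem_Ioi.mpr (lt_of_lt_of_le hr₁pos hr₁s)) h).le
      simp only [pow_zero, mul_one]
      rw [hc₀]
      linarith
    have hcascade : ∀ j : ℕ, j ≤ m-1 → ∃ c : ℝ, 0 < c ∧ ∃ R : ℝ, 1 ≤ R ∧
        ∀ r, R ≤ r → w (m-1-j) r ≤ -c * r^(2*j) := by
      intro j
      induction j with
      | zero =>
        intro _
        exact ⟨c₀, hc₀pos, R₁, hR₁1, fun r hr => hub r hr⟩
      | succ j ih =>
        intro hj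
        obtain ⟨c, hc, R, hR, hb⟩ := ih (by omega)
        have hklt : m-1-(j+1) < m := by omega
        have hkk : (m-1-(j+1)) + 1 = m-1-j := by omega
        have hH' := hHder (m-1-(j+1)) hklt
        rw [hkk] at hH'
        have hf' : ContinuousOn (w (m-1-j)) (Set.Ioi 0) :=
          (hCont (m-1-j) (by omega)).mono Set.Ioi_subset_Ici_self
        obtain ⟨c', hc', R', hR', hb'⟩ := RadialAux.cascade_down hN (hDa _ hklt)
          ((hpeel _ hklt).2.2) hH' hf' hc hR hb
        refine ⟨c', hc', R', hR', fun r hr => ?_⟩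
        have h1 := hb' r hr
        rw [show 2*j+2 = 2*(j+1) from by ring] at h1
        exact h1
    obtain ⟨c, hc, R, hR1, hdec⟩ := hcascade (m-1) (le_refl _)
    rw [show m-1-(m-1) = 0 from by omega] at hdec
    have hdec' : ∀ r : ℝ, R ≤ r → u r ≤ -c * r^(2*(m-1)) := by
      intro r hr
      have h1 := hdec r hr
      simpa [hw] using h1
    have hR0 : (0:ℝ) < R := lt_of_lt_of_le one_pos hR1
    have hdecay : ∀ r : ℝ, R ≤ r → u r ≤ -c * r^(2*m-4) := by
      intro r hr
      have hr1 : (1:ℝ) ≤ r := le_trans hR1 hr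
      have hpow : r^(2*m-4) ≤ r^(2*(m-1)) := pow_le_pow_right₀ hr1 (by omega)
      have h1 := hdec' r hr
      nlinarith [hpow, hc]
    constructor
    · -- integrability
      have hmeasIoi : IntegrableOn (fun r => Real.exp (u r) * r^(N-1)) (Set.Ioi R)
          volume := by
        have hbound : ∀ x : ℝ, x ∈ Set.Ioi R →
            ‖Real.exp (u x) * x^(N-1)‖
              ≤ (Nat.factorial (N-1) : ℝ) * (2/c)^(N-1) * Real.exp (-(c/2) * x) := by
          intro x hx
          have hx1 : (1:ℝ) ≤ x := le_trans hR1 (le_of_lt hx)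
          have hx0 : (0:ℝ) < x := lt_of_lt_of_le one_pos hx1
          have h1 : u x ≤ -c * x := by
            have h2 := hdec' x (le_of_lt hx)
            have h3 : x ≤ x^(2*(m-1)) := le_self_pow₀ hx1 (by omega)
            nlinarith
          have h4 : Real.exp (u x) ≤ Real.exp (-c * x) := Real.exp_le_exp.mpr h1
          have h5 : ((c/2)*x)^(N-1) / (Nat.factorial (N-1) : ℝ) ≤ Real.exp ((c/2)*x) := by
            have h6 := Real.sum_le_exp_of_nonneg (x := (c/2)*x) (by positivity) N
            have h7 : ((c/2)*x)^(N-1) / (Nat.factorial (N-1) : ℝ)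
                ≤ ∑ i ∈ Finset.range N, ((c/2)*x)^i / (Nat.factorial i : ℝ) := by
              apply Finset.single_le_sum (f := fun i => ((c/2)*x)^i / (Nat.factorial i : ℝ))
              · intro i _
                positivity
              · exact Finset.mem_range.mpr (by omega)
            exact le_trans h7 h6
          have h8 : x^(N-1) ≤ (Nat.factorial (N-1) : ℝ) * (2/c)^(N-1) * Real.exp ((c/2)*x) := by
            have h9 : ((c/2))^(N-1) * x^(N-1) = ((c/2)*x)^(N-1) := (mul_pow _ _ _).symm
            rw [div_le_iff₀ (by positivity : (0:ℝ) < (Nat.factorial (N-1) : ℝ))] at h5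
            have h11 : (2/c)^(N-1) * ((c/2)^(N-1) * x^(N-1)) = x^(N-1) := by
              rw [← mul_assoc, ← mul_pow]
              have h12 : (2/c) * (c/2) = 1 := by field_simp
              rw [h12, one_pow, one_mul]
            calc x^(N-1) = (2/c)^(N-1) * ((c/2)^(N-1) * x^(N-1)) := h11.symm
              _ = (2/c)^(N-1) * ((c/2)*x)^(N-1) := by rw [h9]
              _ ≤ (2/c)^(N-1) * (Real.exp ((c/2)*x) * (Nat.factorial (N-1) : ℝ)) :=
                  mul_le_mul_of_nonneg_left h5 (by positivity)
              _ = (Nat.factorial (N-1) : ℝ) * (2/c)^(N-1) * Real.exp ((c/2)*x) := by ring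
          have hnorm : ‖Real.exp (u x) * x^(N-1)‖ = Real.exp (u x) * x^(N-1) := by
            rw [Real.norm_eq_abs, abs_of_nonneg (by positivity)]
          rw [hnorm]
          calc Real.exp (u x) * x^(N-1)
              ≤ Real.exp (-c*x) * ((Nat.factorial (N-1) : ℝ) * (2/c)^(N-1)
                * Real.exp ((c/2)*x)) :=
                mul_le_mul h4 h8 (by positivity) (by positivity)
            _ = (Nat.factorial (N-1) : ℝ) * (2/c)^(N-1)
                * (Real.exp (-c*x) * Real.exp ((c/2)*x)) := by ring
            _ = (Nat.factorial (N-1) : ℝ) * (2/c)^(N-1) * Real.exp (-(c/2)*x) := by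
                rw [← Real.exp_add]
                congr 1
                ring
        have hgint : IntegrableOn
            (fun x => (Nat.factorial (N-1) : ℝ) * (2/c)^(N-1) * Real.exp (-(c/2) * x))
            (Set.Ioi R) volume := by
          exact (exp_neg_integrableOn_Ioi R (by positivity : (0:ℝ) < c/2)).const_mul _
        have hmeas : AEStronglyMeasurable (fun r => Real.exp (u r) * r^(N-1))
            (volume.restrict (Set.Ioi R)) := by
          apply ContinuousOn.aestronglyMeasurable ?_ measurableSet_Ioi
          refine ((Real.continuous_exp.comp_continuousOn (hucont.mono ?_)).mul
            (continuousOn_pow _))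
          exact fun x hx => le_trans hR0.le (le_of_lt hx)
        apply Integrable.mono' hgint hmeas
        rw [ae_restrict_iff' measurableSet_Ioi]
        exact Filter.Eventually.of_forall hbound
      have hIcc : IntegrableOn (fun r => Real.exp (u r) * r^(N-1)) (Set.Ioc 0 R)
          volume := by
        have h1 : ContinuousOn (fun r => Real.exp (u r) * r^(N-1)) (Set.Icc 0 R) :=
          ((Real.continuous_exp.comp_continuousOn (hucont.mono (fun x hx => hx.1))).mul
            (continuousOn_pow _))
        exact (h1.integrableOn_Icc).mono_set Set.Ioc_subset_Icc_self
      have hunion : Set.Ioi (0:ℝ) = Set.Ioc 0 R ∪ Set.Ioi R :=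
        (Set.Ioc_union_Ioi_eq_Ioi hR0.le).symm
      rw [hunion]
      exact hIcc.union hmeasIoi
    · exact ⟨c, hc, R, hR0, hdecay⟩
end

section
/- Let N ≥ 3 be an integer and a, b ∈ ℝ, and let u ∈ C^4([0,∞)) be the radial solution of Δ_N² u = −e^u on (0,∞) with u'(0) = 0, (Δ_N u)'(0) = 0, (Δ_N u)(0) = a and u(0) = −b. Then lim_{r→∞} (Δ_N u)(r) exists in [−∞, 0), i.e. the limit is strictly negative (possibly −∞). -/
open MeasureTheory Filter Set
open scoped ENNReal

set_option maxHeartbeats 1600000 in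
/-- Let `N ≥ 3`, `a, b ∈ ℝ`, and `u ∈ C^4([0,∞))` solve `Δ_N² u = -e^u` on
`(0,∞)` with `u'(0) = 0`, `(Δ_N u)'(0) = 0`, `(Δ_N u)(0) = a` and `u(0) = -b`. Then
`lim_{r→∞} (Δ_N u)(r)` exists in `[-∞,0)`, i.e. it is strictly negative (possibly `-∞`). -/
theorem limit_laplacian_neg_biharmonic
    (N : ℕ) (hN : 3 ≤ N) (a b : ℝ) (u : ℝ → ℝ)
    (hu : ContDiffOn ℝ 4 u (Set.Ici 0))
    (heq : ∀ r : ℝ, 0 < r → (rlap N)^[2] u r = -Real.exp (u r))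
    (hd0 : derivWithin u (Set.Ici 0) 0 = 0)
    (hd1 : derivWithin (rlap N u) (Set.Ici 0) 0 = 0)
    (hv1 : rlap N u 0 = a) (hv0 : u 0 = -b) :
    ∃ L : EReal, Tendsto (fun r => ((rlap N u r : ℝ) : EReal)) atTop (nhds L) ∧ L < 0 := by
  obtain ⟨n, rfl⟩ : ∃ n, N = n + 3 := ⟨N - 3, by omega⟩
  set c : ℝ := (n : ℝ) + 2 with hc_def
  set v : ℝ → ℝ := rlap (n + 3) u with hv_def
  -- basic smoothness on (0, ∞)
  have hC : ContDiffOn ℝ 4 u (Ioi 0) := hu.mono Ioi_subset_Ici_self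
  have hC1 : ContDiffOn ℝ 3 (deriv u) (Ioi 0) := hC.deriv_of_isOpen isOpen_Ioi (by norm_num)
  have hC2 : ContDiffOn ℝ 2 (deriv (deriv u)) (Ioi 0) :=
    hC1.deriv_of_isOpen isOpen_Ioi (by norm_num)
  have hC3 : ContDiffOn ℝ 1 (deriv (deriv (deriv u))) (Ioi 0) :=
    hC2.deriv_of_isOpen isOpen_Ioi (by norm_num)
  have hdu1 : ∀ r : ℝ, 0 < r → HasDerivAt (deriv u) (deriv (deriv u) r) r := fun r hr =>
    (((hC1.differentiableOn (by norm_num)).differentiableAt (Ioi_mem_nhds hr))).hasDerivAt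
  have hdu2 : ∀ r : ℝ, 0 < r → HasDerivAt (deriv (deriv u)) (deriv (deriv (deriv u)) r) r :=
    fun r hr =>
    (((hC2.differentiableOn (by norm_num)).differentiableAt (Ioi_mem_nhds hr))).hasDerivAt
  have hdu3 : ∀ r : ℝ, 0 < r → DifferentiableAt ℝ (deriv (deriv (deriv u))) r := fun r hr =>
    ((hC3.differentiableOn (by norm_num)).differentiableAt (Ioi_mem_nhds hr))
  -- v on (0,∞)
  have hv_eq : ∀ r : ℝ, r ≠ 0 → v r = deriv (deriv u) r + c / r * deriv u r := by
    intro r hr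
    rw [hv_def]; simp only [rlap, if_neg hr, hc_def]; push_cast; ring
  have hv_ev : ∀ r : ℝ, 0 < r →
      v =ᶠ[nhds r] fun s => deriv (deriv u) s + c / s * deriv u s := by
    intro r hr
    filter_upwards [Ioi_mem_nhds hr] with s hs using hv_eq s (ne_of_gt hs)
  have hdc : ∀ r : ℝ, 0 < r → HasDerivAt (fun s : ℝ => c / s) (-(c / r ^ 2)) r := by
    intro r hr
    simpa [div_eq_mul_inv, neg_div] using (hasDerivAt_inv (ne_of_gt hr)).const_mul c
  have hv' : ∀ r : ℝ, 0 < r → HasDerivAt v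
      (deriv (deriv (deriv u)) r + c * deriv (deriv u) r / r - c * deriv u r / r ^ 2) r := by
    intro r hr
    have h4 : HasDerivAt (fun s => deriv (deriv u) s + c / s * deriv u s) _ r := (hdu2 r hr).fun_add (((hdc r hr).fun_mul (hdu1 r hr)))
    have h5 : HasDerivAt v _ r := h4.congr_of_eventuallyEq (hv_ev r hr)
    convert h5 using 1
    field_simp
    ring
  have hVval : ∀ r : ℝ, 0 < r → deriv v r =
      deriv (deriv (deriv u)) r + c * deriv (deriv u) r / r - c * deriv u r / r ^ 2 :=
    fun r hr => (hv' r hr).deriv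
  -- deriv v is differentiable on (0,∞)
  have hVdiff : ∀ r : ℝ, 0 < r → DifferentiableAt ℝ (deriv v) r := by
    intro r hr
    have hEv : deriv v =ᶠ[nhds r] fun s =>
        deriv (deriv (deriv u)) s + c * deriv (deriv u) s / s - c * deriv u s / s ^ 2 := by
      filter_upwards [Ioi_mem_nhds hr] with s hs using hVval s hs
    have hD : DifferentiableAt ℝ (fun s =>
        deriv (deriv (deriv u)) s + c * deriv (deriv u) s / s - c * deriv u s / s ^ 2) r := by
      have d3 := hdu3 r hr
      have d2 := (hdu2 r hr).differentiableAt
      have d1 := (hdu1 r hr).differentiableAt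
      exact (d3.add ((d2.const_mul c).div differentiableAt_id (ne_of_gt hr))).sub
        ((d1.const_mul c).div (differentiableAt_id.pow 2) (by simpa using pow_ne_zero 2 (ne_of_gt hr)))
    exact hEv.differentiableAt_iff.mpr hD
  have hVder : ∀ r : ℝ, 0 < r → HasDerivAt (deriv v) (deriv (deriv v) r) r := fun r hr =>
    (hVdiff r hr).hasDerivAt
  -- the ODE for v
  have hode : ∀ r : ℝ, 0 < r →
      deriv (deriv v) r + c / r * deriv v r = -Real.exp (u r) := by
    intro r hr
    have h := heq r hr
    rw [Function.iterate_succ_apply', Function.iterate_one] at h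
    rw [← hv_def] at h
    simp only [rlap, if_neg (ne_of_gt hr)] at h
    have hcast : ((n + 3 : ℕ) : ℝ) - 1 = c := by rw [hc_def]; push_cast; ring
    rw [hcast] at h
    exact h
  -- w := r^(n+2) * v'
  set w : ℝ → ℝ := fun r => r ^ (n + 2) * deriv v r with hw_def
  have hw' : ∀ r : ℝ, 0 < r → HasDerivAt w (-(r ^ (n + 2) * Real.exp (u r))) r := by
    intro r hr
    have h1 : HasDerivAt (fun s => s ^ (n + 2) * deriv v s) _ r :=
      (hasDerivAt_pow (n + 2) r).fun_mul (hVder r hr)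
    have hdV : deriv (deriv v) r = -Real.exp (u r) - c / r * deriv v r := by
      linarith [hode r hr]
    convert h1 using 1
    rw [hdV, show n + 2 - 1 = n + 1 from rfl, hc_def]
    have hpow : r ^ (n + 2) = r ^ (n + 1) * r := pow_succ r (n + 1)
    field_simp
    push_cast
    ring
  have hwanti : AntitoneOn w (Ioi 0) := by
    refine antitoneOn_of_deriv_nonpos (convex_Ioi 0)
      (fun r hr => (hw' r hr).continuousAt.continuousWithinAt)
      (fun r hr => by
        rw [interior_Ioi] at hr
        exact (hw' r hr).differentiableAt.differentiableWithinAt) ?_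
    intro r hr
    rw [interior_Ioi] at hr
    rw [(hw' r hr).deriv]
    have : 0 < r ^ (n + 2) * Real.exp (u r) := mul_pos (pow_pos hr _) (Real.exp_pos _)
    linarith
  -- boundary behaviour at 0⁺
  set U1 : ℝ → ℝ := derivWithin u (Ici 0) with hU1_def
  set U2 : ℝ → ℝ := derivWithin U1 (Ici 0) with hU2_def
  set U3 : ℝ → ℝ := derivWithin U2 (Ici 0) with hU3_def
  have hU1 : ContDiffOn ℝ 3 U1 (Ici 0) := hu.derivWithin (uniqueDiffOn_Ici 0) (by norm_num)
  have hU2 : ContDiffOn ℝ 2 U2 (Ici 0) := hU1.derivWithin (uniqueDiffOn_Ici 0) (by norm_num)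
  have hU3 : ContDiffOn ℝ 1 U3 (Ici 0) := hU2.derivWithin (uniqueDiffOn_Ici 0) (by norm_num)
  have hU1e : ∀ r : ℝ, 0 < r → U1 r = deriv u r := fun r hr =>
    derivWithin_of_mem_nhds (Ici_mem_nhds hr)
  have hU2e : ∀ r : ℝ, 0 < r → U2 r = deriv (deriv u) r := by
    intro r hr
    rw [hU2_def, derivWithin_of_mem_nhds (Ici_mem_nhds hr)]
    exact Filter.EventuallyEq.deriv_eq (by
      filter_upwards [Ioi_mem_nhds hr] with s hs using hU1e s hs)
  have hU3e : ∀ r : ℝ, 0 < r → U3 r = deriv (deriv (deriv u)) r := by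
    intro r hr
    rw [hU3_def, derivWithin_of_mem_nhds (Ici_mem_nhds hr)]
    exact Filter.EventuallyEq.deriv_eq (by
      filter_upwards [Ioi_mem_nhds hr] with s hs using hU2e s hs)
  have htendU : ∀ (f : ℝ → ℝ), ContDiffOn ℝ 1 f (Ici 0) →
      Tendsto f (nhdsWithin 0 (Ioi 0)) (nhds (f 0)) := by
    intro f hf
    have := (hf.continuousOn.continuousWithinAt (self_mem_Ici (a := (0:ℝ)))).tendsto
    exact this.mono_left (nhdsWithin_mono _ Ioi_subset_Ici_self)
  have htend1 : Tendsto (deriv u) (nhdsWithin 0 (Ioi 0)) (nhds 0) := by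
    have h := htendU U1 (hU1.of_le (by norm_num))
    rw [show U1 0 = 0 from hd0] at h
    exact h.congr' (by filter_upwards [self_mem_nhdsWithin] with s hs using hU1e s hs)
  have htend2 : Tendsto (deriv (deriv u)) (nhdsWithin 0 (Ioi 0)) (nhds (U2 0)) := by
    have h := htendU U2 (hU2.of_le (by norm_num))
    exact h.congr' (by filter_upwards [self_mem_nhdsWithin] with s hs using hU2e s hs)
  have htend3 : Tendsto (deriv (deriv (deriv u))) (nhdsWithin 0 (Ioi 0)) (nhds (U3 0)) := by
    have h := htendU U3 hU3
    exact h.congr' (by filter_upwards [self_mem_nhdsWithin] with s hs using hU3e s hs)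
  have htpow : ∀ k : ℕ, Tendsto (fun s : ℝ => s ^ k) (nhdsWithin 0 (Ioi 0)) (nhds ((0:ℝ) ^ k)) :=
    fun k => ((continuous_pow k).tendsto 0).mono_left nhdsWithin_le_nhds
  have hw0 : Tendsto w (nhdsWithin 0 (Ioi 0)) (nhds 0) := by
    have hform : ∀ s : ℝ, 0 < s → w s =
        s ^ (n + 2) * deriv (deriv (deriv u)) s + c * (s ^ (n + 1) * deriv (deriv u) s)
          - c * (s ^ n * deriv u s) := by
      intro s hs
      rw [hw_def]
      simp only
      rw [hVval s hs]
      have hs' := ne_of_gt hs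
      field_simp
      ring
    have hT : Tendsto (fun s : ℝ => s ^ (n + 2) * deriv (deriv (deriv u)) s
        + c * (s ^ (n + 1) * deriv (deriv u) s) - c * (s ^ n * deriv u s))
        (nhdsWithin 0 (Ioi 0))
        (nhds ((0:ℝ) ^ (n + 2) * U3 0 + c * ((0:ℝ) ^ (n + 1) * U2 0) - c * ((0:ℝ) ^ n * 0))) :=
      (((htpow (n + 2)).mul htend3).add (((htpow (n + 1)).mul htend2).const_mul c)).sub
        (((htpow n).mul htend1).const_mul c)
    have hzero : (0:ℝ) ^ (n + 2) * U3 0 + c * ((0:ℝ) ^ (n + 1) * U2 0)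
        - c * ((0:ℝ) ^ n * 0) = 0 := by
      simp [pow_succ]
    rw [hzero] at hT
    exact hT.congr' (by filter_upwards [self_mem_nhdsWithin] with s hs using (hform s hs).symm)
  have hwle : ∀ r : ℝ, 0 < r → w r ≤ 0 := by
    intro r hr
    refine ge_of_tendsto hw0 ?_
    filter_upwards [Ioo_mem_nhdsGT_of_mem ⟨le_refl 0, hr⟩] with s hs
    exact hwanti hs.1 hr hs.2.le
  have hVle : ∀ r : ℝ, 0 < r → deriv v r ≤ 0 := by
    intro r hr
    have h := hwle r hr
    rw [hw_def] at h
    simp only at h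
    nlinarith [pow_pos hr (n + 2)]
  have hvanti : AntitoneOn v (Ioi 0) := by
    refine antitoneOn_of_deriv_nonpos (convex_Ioi 0)
      (fun r hr => (hv' r hr).continuousAt.continuousWithinAt)
      (fun r hr => by
        rw [interior_Ioi] at hr
        exact (hv' r hr).differentiableAt.differentiableWithinAt) ?_
    intro r hr
    rw [interior_Ioi] at hr
    exact hVle r hr
  -- the limit exists in EReal
  set f : ℝ → EReal := fun r => ((v (max r 1) : ℝ) : EReal) with hf_def
  have hmaxpos : ∀ r : ℝ, (0:ℝ) < max r 1 := fun r => lt_of_lt_of_le one_pos (le_max_right r 1)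
  have hf_anti : Antitone f := by
    intro r s hrs
    exact EReal.coe_le_coe_iff.mpr (hvanti (hmaxpos r) (hmaxpos s) (max_le_max hrs le_rfl))
  have htendsf : Tendsto f atTop (nhds (⨅ r, f r)) := tendsto_atTop_iInf hf_anti
  refine ⟨⨅ r, f r, ?_, ?_⟩
  · refine htendsf.congr' ?_
    filter_upwards [eventually_ge_atTop (1:ℝ)] with r hr
    rw [hf_def]
    simp only [max_eq_left hr]
  · by_contra hL
    push_neg at hL
    have hv_nonneg : ∀ r : ℝ, 0 < r → 0 ≤ v r := by
      intro r hr
      have h1 : (⨅ r, f r) ≤ f r := iInf_le _ r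
      have h2 : (0 : EReal) ≤ f r := le_trans hL h1
      have h3 : (0:ℝ) ≤ v (max r 1) := EReal.coe_nonneg.mp (by rw [hf_def] at h2; exact h2)
      have h4 : v (max r 1) ≤ v r := hvanti hr (hmaxpos r) (le_max_left r 1)
      linarith
    -- u' ≥ 0 on (0,∞)
    have hu1nonneg : ∀ r : ℝ, 0 < r → 0 ≤ deriv u r := by
      have hp' : ∀ r : ℝ, 0 < r → HasDerivAt (fun s : ℝ => s ^ (n + 2) * deriv u s)
          ((↑(n + 2) * r ^ (n + 1)) * deriv u r + r ^ (n + 2) * deriv (deriv u) r) r := by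
        intro r hr
        simpa using (hasDerivAt_pow (n + 2) r).fun_mul (hdu1 r hr)
      have hpderiv : ∀ r : ℝ, 0 < r →
          0 ≤ (↑(n + 2) * r ^ (n + 1)) * deriv u r + r ^ (n + 2) * deriv (deriv u) r := by
        intro r hr
        have h1 : (↑(n + 2) * r ^ (n + 1)) * deriv u r + r ^ (n + 2) * deriv (deriv u) r
            = r ^ (n + 2) * v r := by
          rw [hv_eq r (ne_of_gt hr)]
          have : r ^ (n + 2) = r ^ (n + 1) * r := pow_succ r (n + 1)
          push_cast
          field_simp
          ring
        rw [h1]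
        exact mul_nonneg (le_of_lt (pow_pos hr _)) (hv_nonneg r hr)
      have hpmono : MonotoneOn (fun s : ℝ => s ^ (n + 2) * deriv u s) (Ioi 0) := by
        refine monotoneOn_of_deriv_nonneg (convex_Ioi 0)
          (fun r hr => (hp' r hr).continuousAt.continuousWithinAt)
          (fun r hr => by
            rw [interior_Ioi] at hr
            exact (hp' r hr).differentiableAt.differentiableWithinAt) ?_
        intro r hr
        rw [interior_Ioi] at hr
        rw [(hp' r hr).deriv]
        exact hpderiv r hr
      have hp0 : Tendsto (fun s : ℝ => s ^ (n + 2) * deriv u s)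
          (nhdsWithin 0 (Ioi 0)) (nhds 0) := by
        have := (htpow (n + 2)).mul htend1
        simpa using this
      intro r hr
      have hpge : 0 ≤ r ^ (n + 2) * deriv u r := by
        refine le_of_tendsto hp0 ?_
        filter_upwards [Ioo_mem_nhdsGT_of_mem ⟨le_refl 0, hr⟩] with s hs
        exact hpmono hs.1 hr hs.2.le
      nlinarith [pow_pos hr (n + 2)]
    have humono : MonotoneOn u (Ici 0) := by
      refine monotoneOn_of_deriv_nonneg (convex_Ici 0) hu.continuousOn ?_ ?_
      · rw [interior_Ici]
        exact fun r hr =>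
          ((hC.differentiableOn (by norm_num)).differentiableAt (Ioi_mem_nhds hr)).differentiableWithinAt
      · rw [interior_Ici]
        exact fun r hr => hu1nonneg r hr
    have hub : ∀ r : ℝ, 0 ≤ r → -b ≤ u r := by
      intro r hr
      have := humono (self_mem_Ici (a := (0:ℝ))) hr hr
      rw [hv0] at this
      exact this
    -- quantitative decay of w
    set K : ℝ := Real.exp (-b) / (n + 3) with hK_def
    have hK : 0 < K := by
      rw [hK_def]
      positivity
    have hq' : ∀ r : ℝ, 0 < r → HasDerivAt (fun s => w s + K * s ^ (n + 3))
        (-(r ^ (n + 2) * Real.exp (u r)) + K * (↑(n + 3) * r ^ (n + 2))) r := by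
      intro r hr
      exact (hw' r hr).add (by simpa using (hasDerivAt_pow (n + 3) r).const_mul K)
    have hqanti : AntitoneOn (fun s => w s + K * s ^ (n + 3)) (Ioi 0) := by
      refine antitoneOn_of_deriv_nonpos (convex_Ioi 0)
        (fun r hr => (hq' r hr).continuousAt.continuousWithinAt)
        (fun r hr => by
          rw [interior_Ioi] at hr
          exact (hq' r hr).differentiableAt.differentiableWithinAt) ?_
      intro r hr
      rw [interior_Ioi] at hr
      rw [(hq' r hr).deriv]
      have hKn : K * (↑(n + 3) : ℝ) = Real.exp (-b) := by
        rw [hK_def]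
        push_cast
        field_simp
      have hexp : Real.exp (-b) ≤ Real.exp (u r) := Real.exp_le_exp.mpr (hub r hr.le)
      have hpow : (0:ℝ) < r ^ (n + 2) := pow_pos hr _
      have : K * (↑(n + 3) * r ^ (n + 2)) = Real.exp (-b) * r ^ (n + 2) := by
        rw [← mul_assoc, hKn]
      rw [this]
      nlinarith
    set C₀ : ℝ := w 1 + K * 1 ^ (n + 3) with hC0_def
    set C₁ : ℝ := max C₀ 0 with hC1_def
    have hC1nonneg : 0 ≤ C₁ := le_max_right _ _
    have hC0C1 : C₀ ≤ C₁ := le_max_left _ _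
    have hVbound : ∀ r : ℝ, 1 ≤ r → deriv v r ≤ C₁ - K * r := by
      intro r hr
      have hr0 : (0:ℝ) < r := lt_of_lt_of_le one_pos hr
      have h1 : w r + K * r ^ (n + 3) ≤ C₀ := hqanti (mem_Ioi.mpr one_pos) (mem_Ioi.mpr hr0) hr
      have hw_eq : w r = r ^ (n + 2) * deriv v r := by rw [hw_def]
      have hpow3 : r ^ (n + 3) = r ^ (n + 2) * r := pow_succ r (n + 2)
      have h2 : r ^ (n + 2) * deriv v r ≤ C₀ - K * (r ^ (n + 2) * r) := by
        rw [← hw_eq, ← hpow3]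
        linarith
      have hpone : (1:ℝ) ≤ r ^ (n + 2) := one_le_pow₀ hr
      nlinarith [pow_pos hr0 (n + 2)]
    -- v eventually very negative: contradiction
    have hφ' : ∀ r : ℝ, 0 < r → HasDerivAt (fun s => v s + K / 2 * s ^ 2 - C₁ * s)
        (deriv v r + K / 2 * (2 * r) - C₁) r := by
      intro r hr
      have hvd : HasDerivAt v (deriv v r) r := (hv' r hr).differentiableAt.hasDerivAt
      have h2 : HasDerivAt (fun s : ℝ => K / 2 * s ^ 2) (K / 2 * (2 * r)) r := by
        simpa using (hasDerivAt_pow 2 r).const_mul (K / 2)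
      have h3 : HasDerivAt (fun s : ℝ => C₁ * s) C₁ r := by
        simpa using (hasDerivAt_id r).const_mul C₁
      exact (hvd.add h2).sub h3
    have hφanti : AntitoneOn (fun s => v s + K / 2 * s ^ 2 - C₁ * s) (Ici 1) := by
      refine antitoneOn_of_deriv_nonpos (convex_Ici 1)
        (fun r hr => (hφ' r (lt_of_lt_of_le one_pos hr)).continuousAt.continuousWithinAt)
        (fun r hr => by
          rw [interior_Ici] at hr
          exact (hφ' r (lt_trans one_pos hr)).differentiableAt.differentiableWithinAt) ?_
      intro r hr
      rw [interior_Ici] at hr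
      rw [(hφ' r (lt_trans one_pos hr)).deriv]
      have := hVbound r hr.le
      linarith
    obtain ⟨φ1, hφ1_def⟩ : ∃ x : ℝ, x = v 1 + K / 2 * 1 ^ 2 - C₁ * 1 := ⟨_, rfl⟩
    obtain ⟨R, hR_def⟩ : ∃ x : ℝ, x = max 1 ((2 * C₁ + 2 * |φ1| + 2) / K) := ⟨_, rfl⟩
    have hR1 : (1:ℝ) ≤ R := by rw [hR_def]; exact le_max_left _ _
    have hR0 : (0:ℝ) < R := lt_of_lt_of_le one_pos hR1
    have hKR : 2 * C₁ + 2 * |φ1| + 2 ≤ K * R := by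
      have h := le_max_right 1 ((2 * C₁ + 2 * |φ1| + 2) / K)
      rw [← hR_def] at h
      rw [div_le_iff₀ hK] at h
      linarith
    have hφR : v R + K / 2 * R ^ 2 - C₁ * R ≤ φ1 := by
      have h := hφanti (self_mem_Ici (a := (1:ℝ))) hR1 hR1
      rw [hφ1_def]
      exact h
    have hvR : 0 ≤ v R := hv_nonneg R hR0
    have habs : φ1 ≤ |φ1| := le_abs_self _
    have h0abs : 0 ≤ |φ1| := abs_nonneg _
    have h1 : (2 * C₁ + 2 * |φ1| + 2) * R ≤ (K * R) * R :=
      mul_le_mul_of_nonneg_right hKR (le_of_lt hR0)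
    have h2 : C₁ * R + |φ1| * R + R ≤ K / 2 * R ^ 2 := by nlinarith [h1]
    have h3 : |φ1| ≤ |φ1| * R := le_mul_of_one_le_right h0abs hR1
    linarith [hφR, hvR, habs, h2, h3, hR1]
end
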